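/- arXiv:2305.12022 — 4 statements merged into one kernel-verified Lean document; each statement's English description precedes it below -/
import Mathlib

section
/- Let O be a Dedekind domain with fraction field E, let m be a maximal ideal of O with residue field k = O/m, and let Λ be an O-algebra that is finitely generated and torsion-free as an O-module, containing O in its center. Suppose there is a positive integer d such that the k-algebra Λ/mΛ is isomorphic to the matrix algebra Mat_d(k). Then the E-algebra H = Λ ⊗_O E is a central simple E-algebra of dimension d². -/
open TensorProduct

section helpers

/-- Nakayama variant: if `X ≤ N ⊔ m • X` with `X` f.g., then some `a ≡ 1 mod m` maps `X` into `N`. -/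
lemma aux_nak2 {O : Type*} [CommRing O] {M : Type*} [AddCommGroup M] [Module O M] (m : Ideal O)
    (X N : Submodule O M) (hfg : X.FG) (h : X ≤ N ⊔ m • X) :
    ∃ a : O, a - 1 ∈ m ∧ ∀ x ∈ X, a • x ∈ N := by
  have hle : X.map N.mkQ ≤ m • X.map N.mkQ := by
    rintro _ ⟨x, hx, rfl⟩
    obtain ⟨n, hn, y, hy, rfl⟩ := Submodule.mem_sup.mp (h hx)
    rw [map_add]
    have h1 : N.mkQ n = 0 := by
      rwa [Submodule.mkQ_apply, Submodule.Quotient.mk_eq_zero]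
    rw [h1, zero_add, ← Submodule.map_smul'']
    exact Submodule.mem_map_of_mem hy
  obtain ⟨r, hr, hr0⟩ := Submodule.exists_sub_one_mem_and_smul_eq_zero_of_fg_of_le_smul m
    (X.map N.mkQ) (hfg.map _) hle
  refine ⟨r, hr, fun x hx => ?_⟩
  have h0 : N.mkQ (r • x) = 0 := by
    rw [map_smul]; exact hr0 _ (Submodule.mem_map_of_mem hx)
  rwa [Submodule.mkQ_apply, Submodule.Quotient.mk_eq_zero] at h0

lemma aux_fg_of_le {O : Type*} [CommRing O] [IsNoetherianRing O] {M : Type*} [AddCommGroup M]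
    [Module O M] {X L : Submodule O M} (hL : L.FG) (h : X ≤ L) : X.FG := by
  haveI := isNoetherian_of_fg_of_noetherian L hL
  have h1 : (X.comap L.subtype).FG := IsNoetherian.noetherian _
  have h2 := h1.map L.subtype
  rwa [Submodule.map_comap_subtype, inf_eq_right.mpr h] at h2

end helpers

section sat

variable {O : Type*} [CommRing O] [IsDomain O] [IsDedekindDomain O]
  {E : Type*} [Field E] [Algebra O E] [IsFractionRing O E]
  {V : Type*} [AddCommGroup V] [Module O V] [Module E V] [IsScalarTower O E V]

/-- Saturation: if `Z` is closed under `E`-scalars, then `(L ⊓ Z) ⊓ m • L ≤ m • (L ⊓ Z)`. -/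
lemma aux_sat {m : Ideal O} (hm : m ≠ ⊥)
    (L Z : Submodule O V) (hZ : ∀ (c : E) x, x ∈ Z → c • x ∈ Z)
    {x : V} (hxZ : x ∈ Z) (hxm : x ∈ m • L) : x ∈ m • (L ⊓ Z) := by
  have hm' : (m : FractionalIdeal (nonZeroDivisors O) E) ≠ 0 := by
    simpa using hm
  -- any element of the coe of m⁻¹ multiplies m•L into L
  have hc_smul : ∀ c : E,
      c ∈ (((m : FractionalIdeal (nonZeroDivisors O) E)⁻¹ :
        FractionalIdeal (nonZeroDivisors O) E) : Submodule O E) →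
      ∀ v ∈ m • L, c • v ∈ L := by
    intro c hc v hv
    refine Submodule.smul_induction_on hv ?_ ?_
    · intro a ha u hu
      have hmem : c * algebraMap O E a ∈
          ((((m : FractionalIdeal (nonZeroDivisors O) E)⁻¹ :
            FractionalIdeal (nonZeroDivisors O) E) : Submodule O E) *
           ((m : FractionalIdeal (nonZeroDivisors O) E) : Submodule O E)) :=
        Submodule.mul_mem_mul hc ((FractionalIdeal.mem_coeIdeal _).mpr ⟨a, ha, rfl⟩)
      rw [← FractionalIdeal.coe_mul, inv_mul_cancel₀ hm', FractionalIdeal.coe_one] at hmem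
      obtain ⟨b, hb⟩ := (Submodule.mem_one).mp hmem
      have : c • a • u = b • u := by
        rw [← algebraMap_smul E a u, ← mul_smul, ← hb, algebraMap_smul]
      rw [this]
      exact L.smul_mem b hu
    · intro u w hu hw
      rw [smul_add]; exact L.add_mem hu hw
  -- 1 is in (coe m⁻¹) * (coe m)
  have h1 : (1 : E) ∈
      ((((m : FractionalIdeal (nonZeroDivisors O) E)⁻¹ :
        FractionalIdeal (nonZeroDivisors O) E) : Submodule O E) *
       ((m : FractionalIdeal (nonZeroDivisors O) E) : Submodule O E)) := by
    rw [← FractionalIdeal.coe_mul, inv_mul_cancel₀ hm', FractionalIdeal.coe_one]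
    exact (Submodule.mem_one).mpr ⟨1, map_one _⟩
  have key : ∀ q : E, q ∈
      ((((m : FractionalIdeal (nonZeroDivisors O) E)⁻¹ :
        FractionalIdeal (nonZeroDivisors O) E) : Submodule O E) *
       ((m : FractionalIdeal (nonZeroDivisors O) E) : Submodule O E)) →
      q • x ∈ m • (L ⊓ Z) := by
    intro q hq
    refine Submodule.mul_induction_on hq ?_ ?_
    · intro c hc y hy
      obtain ⟨t, htm, rfl⟩ := (FractionalIdeal.mem_coeIdeal _).mp hy
      have hcx : c • x ∈ L ⊓ Z := ⟨hc_smul c hc x hxm, hZ c x hxZ⟩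
      have heq : (c * algebraMap O E t) • x = t • (c • x) := by
        rw [mul_comm, mul_smul, algebraMap_smul]
      rw [heq]
      exact Submodule.smul_mem_smul htm hcx
    · intro q1 q2 hq1 hq2
      rw [add_smul]; exact Submodule.add_mem _ hq1 hq2
  have := key 1 h1
  rwa [one_smul] at this

lemma aux_notin_smul {m : Ideal O} [m.IsMaximal]
    (L Z : Submodule O V) (hZ : ∀ (c : E) x, x ∈ Z → c • x ∈ Z) (hLfg : L.FG)
    (hX : L ⊓ Z ≠ ⊥) : ¬ (L ⊓ Z ≤ m • L) := by
  intro hle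
  rcases eq_or_ne m ⊥ with rfl | hm
  · rw [Submodule.bot_smul] at hle
    exact hX (le_bot_iff.mp hle)
  · have hsub : L ⊓ Z ≤ m • (L ⊓ Z) := fun x hx =>
      aux_sat hm L Z hZ hx.2 (hle hx)
    have hfg : (L ⊓ Z).FG := aux_fg_of_le hLfg inf_le_left
    obtain ⟨a, ham, ha⟩ :=
      Submodule.exists_sub_one_mem_and_smul_eq_zero_of_fg_of_le_smul m _ hfg hsub
    have ha0 : a ≠ 0 := by
      rintro rfl
      apply (Ideal.IsMaximal.ne_top ‹m.IsMaximal›)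
      rw [Ideal.eq_top_iff_one]
      simpa using m.neg_mem ham
    obtain ⟨x, hx, hx0⟩ := Submodule.exists_mem_ne_zero_of_ne_bot hX
    apply hx0
    have h0 := ha x hx
    rw [← algebraMap_smul E a x] at h0
    have hma : algebraMap O E a ≠ 0 := fun hc => ha0 ((map_eq_zero_iff _
      (IsFractionRing.injective O E)).mp hc)
    calc x = (algebraMap O E a)⁻¹ • (algebraMap O E a • x) := (inv_smul_smul₀ hma x).symm
    _ = 0 := by rw [h0, smul_zero]

end sat


set_option maxHeartbeats 1000000

/-- Let `O` be a Dedekind domain with fraction field `E`, `m` a maximal ideal with residue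
field `k = O/m`, and `Λ` an `O`-algebra, finitely generated and torsion-free as an `O`-module
(containing `O` in its center, via the algebra structure). If the `k`-algebra
`Λ/mΛ ≅ k ⊗[O] Λ` is isomorphic to the matrix algebra `Mat_d(k)`, then `H = Λ ⊗_O E ≅ E ⊗[O] Λ`
is a central simple `E`-algebra of dimension `d²`. -/
theorem stmt_3 (O : Type) [CommRing O] [IsDomain O] [IsDedekindDomain O]
    (E : Type) [Field E] [Algebra O E] [IsFractionRing O E]
    (m : Ideal O) [m.IsMaximal]
    (Λ : Type) [Ring Λ] [Algebra O Λ] [Module.Finite O Λ] [NoZeroSMulDivisors O Λ]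
    (d : ℕ) (hd : 0 < d)
    (h : Nonempty (((O ⧸ m) ⊗[O] Λ) ≃ₐ[O ⧸ m] Matrix (Fin d) (Fin d) (O ⧸ m))) :
    IsSimpleRing (E ⊗[O] Λ) ∧ Algebra.IsCentral E (E ⊗[O] Λ) ∧
      Module.finrank E (E ⊗[O] Λ) = d ^ 2 := by
  classical
  obtain ⟨e⟩ := h
  haveI : Nonempty (Fin d) := ⟨⟨0, hd⟩⟩
  haveI : IsSimpleRing (O ⧸ m) := (isSimpleRing_iff_isField _).mpr
    (Ideal.Quotient.maximal_ideal_iff_isField_quotient m |>.mp ‹m.IsMaximal›)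
  -- the reduction map
  set ρ : Λ →ₗ[O] (O ⧸ m) ⊗[O] Λ := TensorProduct.mk O (O ⧸ m) Λ 1 with hρdef
  have hker : ∀ x : Λ, ρ x = 0 ↔ x ∈ (m • ⊤ : Submodule O Λ) := by
    intro x
    have h1 : (TensorProduct.quotTensorEquivQuotSMul Λ m) (ρ x) =
        Submodule.Quotient.mk x :=
      LinearMap.congr_fun (TensorProduct.quotTensorEquivQuotSMul_comp_mk (M := Λ) m) x
    rw [← (TensorProduct.quotTensorEquivQuotSMul Λ m).map_eq_zero_iff, h1,
      Submodule.Quotient.mk_eq_zero]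
  have hρs : Function.Surjective ρ := by
    intro y
    obtain ⟨x, hx⟩ := Submodule.mkQ_surjective (m • ⊤ : Submodule O Λ)
      ((TensorProduct.quotTensorEquivQuotSMul Λ m) y)
    refine ⟨x, (TensorProduct.quotTensorEquivQuotSMul Λ m).injective ?_⟩
    have h1 : (TensorProduct.quotTensorEquivQuotSMul Λ m) (ρ x) =
        Submodule.Quotient.mk x :=
      LinearMap.congr_fun (TensorProduct.quotTensorEquivQuotSMul_comp_mk (M := Λ) m) x
    rw [h1]; exact hx
  have hρ1 : ρ 1 = 1 := rfl
  have hρm : ∀ x y : Λ, ρ x * ρ y = ρ (x * y) := by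
    intro x y
    show (1 ⊗ₜ[O] x : (O ⧸ m) ⊗[O] Λ) * (1 ⊗ₜ[O] y) = 1 ⊗ₜ[O] (x * y)
    rw [Algebra.TensorProduct.tmul_mul_tmul, one_mul]
  -- the generic fibre map
  set ι : Λ →ₗ[O] E ⊗[O] Λ := TensorProduct.mk O E Λ 1 with hιdef
  haveI hloc : IsLocalizedModule (nonZeroDivisors O) ι :=
    (isLocalizedModule_iff_isBaseChange (nonZeroDivisors O) E ι).mpr
      (TensorProduct.isBaseChange O Λ E)
  have hιinj : Function.Injective ι := by
    intro x y hxy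
    obtain ⟨c, hc⟩ := IsLocalizedModule.exists_of_eq (S := nonZeroDivisors O) (f := ι) hxy
    have hc0 : (c : O) ≠ 0 := nonZeroDivisors.coe_ne_zero c
    have := sub_eq_zero.mpr hc
    rw [← smul_sub] at this
    rcases smul_eq_zero.mp (show (c : O) • (x - y) = 0 from this) with h | h
    · exact absurd h hc0
    · exact sub_eq_zero.mp h
  have hsurj : ∀ y : E ⊗[O] Λ, ∃ xs : Λ × (nonZeroDivisors O), xs.2 • y = ι xs.1 :=
    IsLocalizedModule.surj (nonZeroDivisors O) ι
  have hι1 : ι 1 = 1 := rfl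
  have hιm : ∀ x y : Λ, ι x * ι y = ι (x * y) := by
    intro x y
    show (1 ⊗ₜ[O] x : E ⊗[O] Λ) * (1 ⊗ₜ[O] y) = 1 ⊗ₜ[O] (x * y)
    rw [Algebra.TensorProduct.tmul_mul_tmul, one_mul]
  -- O-smul vs E-smul on H
  have hOE : ∀ (a : O) (z : E ⊗[O] Λ), a • z = algebraMap O E a • z :=
    fun a z => (algebraMap_smul E a z).symm
  -- nontriviality
  haveI : Nontrivial ((O ⧸ m) ⊗[O] Λ) := e.toEquiv.nontrivial
  have h1Λ : (1 : Λ) ≠ 0 := by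
    intro h0
    apply one_ne_zero (α := (O ⧸ m) ⊗[O] Λ)
    rw [← hρ1, h0, map_zero]
  haveI hnt : Nontrivial (E ⊗[O] Λ) := by
    refine ⟨1, 0, fun h0 => h1Λ (hιinj ?_)⟩
    rw [hι1, map_zero, h0]
  -- the lattice
  set Λt : Submodule O (E ⊗[O] Λ) := LinearMap.range ι with hΛtdef
  have hΛtfg : Λt.FG := by
    have := (Module.finite_def.mp ‹Module.Finite O Λ›).map ι
    rwa [Submodule.map_top] at this
  -- ====== SIMPLICITY ======
  have hZsmul : ∀ (I : TwoSidedIdeal (E ⊗[O] Λ)) (c : E) (z : E ⊗[O] Λ), z ∈ I → c • z ∈ I := by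
    intro I c z hz
    rw [Algebra.smul_def]
    exact I.mul_mem_left _ _ hz
  have hsimple : IsSimpleRing (E ⊗[O] Λ) := by
    constructor
    constructor
    intro I
    rcases eq_or_ne I ⊥ with rfl | hI
    · exact Or.inl rfl
    right
    rw [← TwoSidedIdeal.one_mem_iff]
    obtain ⟨y, hyI, hy0⟩ : ∃ y, y ∈ I ∧ y ≠ 0 := by
      by_contra hc
      push_neg at hc
      exact hI (eq_bot_iff.mpr fun y hy => (TwoSidedIdeal.mem_bot _).mpr (hc y hy))
    set Zs : Submodule O (E ⊗[O] Λ) :=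
      { carrier := {z | z ∈ I}
        add_mem' := fun ha hb => I.add_mem ha hb
        zero_mem' := I.zero_mem
        smul_mem' := fun a z hz => by
          have h2 := hZsmul I (algebraMap O E a) z hz
          rw [← hOE a z] at h2
          exact h2 } with hZsdef
    have hZsE : ∀ (c : E) z, z ∈ Zs → c • z ∈ Zs := fun c z hz => hZsmul I c z hz
    obtain ⟨⟨x1, s1⟩, hx1⟩ := hsurj y
    have hs1 : algebraMap O E (s1 : O) ≠ 0 := fun hc =>
      nonZeroDivisors.coe_ne_zero s1 ((map_eq_zero_iff _ (IsFractionRing.injective O E)).mp hc)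
    have hx1eq : ι x1 = algebraMap O E (s1 : O) • y := by rw [← hx1, ← hOE]; rfl
    have hιx1I : ι x1 ∈ I := by
      rw [hx1eq]
      exact hZsmul I _ y hyI
    have hx1ne : ι x1 ≠ 0 := by
      rw [hx1eq]
      intro h0
      apply hy0
      calc y = (algebraMap O E (s1:O))⁻¹ • (algebraMap O E (s1:O) • y) :=
            (inv_smul_smul₀ hs1 y).symm
        _ = 0 := by rw [h0, smul_zero]
    have hXne : Λt ⊓ Zs ≠ ⊥ :=
      (Submodule.ne_bot_iff _).mpr ⟨ι x1, ⟨⟨x1, rfl⟩, hιx1I⟩, hx1ne⟩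
    have hnotle := aux_notin_smul (E := E) (m := m) Λt Zs hZsE hΛtfg hXne
    obtain ⟨xt, hxtX, hxtm⟩ := SetLike.not_le_iff_exists.mp hnotle
    obtain ⟨x0, rfl⟩ := hxtX.1
    have hx0m : x0 ∉ (m • ⊤ : Submodule O Λ) := by
      intro hc
      apply hxtm
      have h2 : ι x0 ∈ Submodule.map ι (m • ⊤ : Submodule O Λ) := Submodule.mem_map_of_mem hc
      rwa [Submodule.map_smul'', Submodule.map_top] at h2
    set N : Submodule O Λ :=
      { carrier := {x | ι x ∈ I}
        add_mem' := fun ha hb => by rw [Set.mem_setOf_eq, map_add]; exact I.add_mem ha hb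
        zero_mem' := by rw [Set.mem_setOf_eq, map_zero]; exact I.zero_mem
        smul_mem' := fun a x hx => by
          rw [Set.mem_setOf_eq, map_smul, hOE]
          exact hZsmul I _ _ hx } with hNdef
    set T : TwoSidedIdeal ((O ⧸ m) ⊗[O] Λ) := TwoSidedIdeal.mk' (ρ '' N)
      ((Set.mem_image ρ N 0).mpr ⟨0, N.zero_mem, map_zero ρ⟩)
      (by rintro _ _ ⟨x, hx, rfl⟩ ⟨y', hy', rfl⟩
          exact ⟨x + y', N.add_mem hx hy', map_add ρ x y'⟩)
      (by rintro _ ⟨x, hx, rfl⟩; exact ⟨-x, N.neg_mem hx, map_neg ρ x⟩)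
      (by
        rintro w _ ⟨x, hx, rfl⟩
        obtain ⟨u, rfl⟩ := hρs w
        refine ⟨u * x, ?_, (hρm u x).symm⟩
        show ι (u * x) ∈ I
        rw [← hιm]
        exact I.mul_mem_left _ _ hx)
      (by
        rintro _ w ⟨x, hx, rfl⟩
        obtain ⟨u, rfl⟩ := hρs w
        refine ⟨x * u, ?_, (hρm x u).symm⟩
        show ι (x * u) ∈ I
        rw [← hιm]
        exact I.mul_mem_right _ _ hx) with hTdef
    have hρx0T : ρ x0 ∈ T := by
      rw [hTdef, TwoSidedIdeal.mem_mk']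
      exact ⟨x0, hxtX.2, rfl⟩
    have hρx0ne : ρ x0 ≠ 0 := fun h0 => hx0m ((hker x0).mp h0)
    set T' : TwoSidedIdeal (Matrix (Fin d) (Fin d) (O ⧸ m)) :=
      T.comap e.symm.toRingEquiv with hT'def
    have h1T : (1 : (O ⧸ m) ⊗[O] Λ) ∈ T := by
      have h1T' : (1 : Matrix (Fin d) (Fin d) (O ⧸ m)) ∈ T' := by
        apply IsSimpleRing.one_mem_of_ne_zero_mem T' (x := e (ρ x0))
        · intro h0
          apply hρx0ne
          have h2 := congrArg e.symm h0
          rwa [AlgEquiv.symm_apply_apply, map_zero] at h2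
        · rw [hT'def, TwoSidedIdeal.mem_comap]
          rw [show e.symm.toRingEquiv (e (ρ x0)) = ρ x0 from e.symm_apply_apply _]
          exact hρx0T
      have h2 := h1T'
      rw [hT'def, TwoSidedIdeal.mem_comap] at h2
      rwa [show e.symm.toRingEquiv (1 : Matrix (Fin d) (Fin d) (O ⧸ m)) = 1 from map_one _] at h2
    obtain ⟨j, hjN, hρj⟩ : ∃ j, j ∈ N ∧ ρ j = 1 := by
      rw [hTdef, TwoSidedIdeal.mem_mk'] at h1T
      obtain ⟨j, hj, hje⟩ := h1T
      exact ⟨j, hj, hje⟩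
    have h1j : (1 : Λ) - j ∈ (m • ⊤ : Submodule O Λ) := by
      rw [← hker, map_sub, hρ1, hρj, sub_self]
    have hmulm : ∀ (x w : Λ), w ∈ (m • ⊤ : Submodule O Λ) → x * w ∈ (m • ⊤ : Submodule O Λ) := by
      intro x w hw
      refine Submodule.smul_induction_on hw ?_ ?_
      · intro a ha u _
        rw [mul_smul_comm]
        exact Submodule.smul_mem_smul ha trivial
      · intro u v hu hv
        rw [mul_add]; exact Submodule.add_mem _ hu hv
    have htop : (⊤ : Submodule O Λ) ≤ N ⊔ m • (⊤ : Submodule O Λ) := by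
      intro x _
      have hx : x = x * j + x * (1 - j) := by rw [mul_sub, mul_one]; abel
      rw [hx]
      refine Submodule.add_mem_sup ?_ (hmulm x _ h1j)
      show ι (x * j) ∈ I
      rw [← hιm]
      exact I.mul_mem_left _ _ hjN
    obtain ⟨a, ham, haN⟩ := aux_nak2 m ⊤ N (Module.finite_def.mp ‹Module.Finite O Λ›) htop
    have ha0 : a ≠ 0 := by
      rintro rfl
      apply Ideal.IsMaximal.ne_top ‹m.IsMaximal›
      rw [Ideal.eq_top_iff_one]
      simpa using m.neg_mem ham
    obtain ⟨⟨x, s⟩, hxs⟩ := hsurj 1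
    have h1 : ι (a • x) ∈ I := haN x trivial
    have heq : ι (a • x) = (algebraMap O E a * algebraMap O E (s : O)) • (1 : E ⊗[O] Λ) := by
      rw [map_smul, ← hxs, mul_smul]
      show a • ((s : O) • (1 : E ⊗[O] Λ)) = _
      rw [hOE (s : O), hOE a]
    have hc0 : algebraMap O E a * algebraMap O E (s : O) ≠ 0 := by
      apply mul_ne_zero _ (fun hc => nonZeroDivisors.coe_ne_zero s
        ((map_eq_zero_iff _ (IsFractionRing.injective O E)).mp hc))
      exact fun hc => ha0 ((map_eq_zero_iff _ (IsFractionRing.injective O E)).mp hc)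
    have h1I : (1 : E ⊗[O] Λ) = (algebraMap O E a * algebraMap O E (s : O))⁻¹ • ι (a • x) := by
      rw [heq, inv_smul_smul₀ hc0]
    rw [h1I]
    exact hZsmul I _ _ h1
    -- ====== CENTRALITY ======
  have hcentral : Algebra.IsCentral E (E ⊗[O] Λ) := by
    constructor
    intro z hz
    set Zc : Submodule O (E ⊗[O] Λ) :=
      (Subalgebra.toSubmodule (Subalgebra.center E (E ⊗[O] Λ))).restrictScalars O with hZcdef
    have hZcE : ∀ (c : E) w, w ∈ Zc → c • w ∈ Zc := fun c w hw =>
      Submodule.smul_mem (Subalgebra.toSubmodule (Subalgebra.center E (E ⊗[O] Λ))) c hw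
    have hXfg : (Λt ⊓ Zc).FG := aux_fg_of_le hΛtfg inf_le_left
    have hcent : ∀ x : Λ, ι x ∈ Zc → ∃ b : O, x - b • 1 ∈ (m • ⊤ : Submodule O Λ) := by
      intro x hx
      have hx' : ι x ∈ Subalgebra.center E (E ⊗[O] Λ) := hx
      have hxc : ∀ w : E ⊗[O] Λ, w * ι x = ι x * w := fun w =>
        (Subalgebra.mem_center_iff (R := E)).mp hx' w
      have hcomm : ∀ u : Λ, u * x = x * u := by
        intro u
        apply hιinj
        rw [← hιm, ← hιm, hxc (ι u)]
      have hmat : e (ρ x) ∈ Subalgebra.center (O ⧸ m) (Matrix (Fin d) (Fin d) (O ⧸ m)) := by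
        rw [Subalgebra.mem_center_iff]
        intro w'
        obtain ⟨w, rfl⟩ := e.surjective w'
        obtain ⟨u, rfl⟩ := hρs w
        rw [← map_mul e (ρ u) (ρ x), hρm, hcomm, ← hρm, map_mul]
      rw [Algebra.IsCentral.center_eq_bot, Algebra.mem_bot] at hmat
      obtain ⟨c, hc⟩ := hmat
      obtain ⟨b, rfl⟩ := Ideal.Quotient.mk_surjective c
      refine ⟨b, ?_⟩
      rw [← hker, map_sub, map_smul, hρ1]
      have h2 : ρ x = algebraMap (O ⧸ m) ((O ⧸ m) ⊗[O] Λ) (Ideal.Quotient.mk m b) := by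
        have h3 := congrArg e.symm hc
        rw [AlgEquiv.symm_apply_apply, AlgEquiv.commutes] at h3
        exact h3.symm
      rw [h2, sub_eq_zero, Algebra.algebraMap_eq_smul_one,
        ← algebraMap_smul (O ⧸ m) b (1 : (O ⧸ m) ⊗[O] Λ), Ideal.Quotient.algebraMap_eq]
    have hXle : Λt ⊓ Zc ≤ Submodule.span O {(1 : E ⊗[O] Λ)} ⊔ m • (Λt ⊓ Zc) := by
      rintro xt ⟨⟨x, rfl⟩, hxc⟩
      obtain ⟨b, hb⟩ := hcent x hxc
      have h1X : (1 : E ⊗[O] Λ) ∈ Λt ⊓ Zc := ⟨⟨1, hι1⟩, Subalgebra.one_mem _⟩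
      have hwX : ι x - b • (1 : E ⊗[O] Λ) ∈ Λt ⊓ Zc :=
        Submodule.sub_mem _ ⟨⟨x, rfl⟩, hxc⟩ (Submodule.smul_mem _ b h1X)
      have hwm : ι x - b • (1 : E ⊗[O] Λ) ∈ m • Λt := by
        have h2 : ι (x - b • 1) ∈ Submodule.map ι (m • ⊤ : Submodule O Λ) :=
          Submodule.mem_map_of_mem hb
        rw [Submodule.map_smul'', Submodule.map_top] at h2
        rw [map_sub, map_smul, hι1] at h2
        exact h2
      rcases eq_or_ne m ⊥ with rfl | hm0
      · rw [Submodule.bot_smul] at hwm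
        have h3 : ι x = b • (1 : E ⊗[O] Λ) := by
          have h4 := (Submodule.mem_bot _).mp hwm
          rw [sub_eq_zero] at h4
          exact h4
        exact Submodule.mem_sup_left (Submodule.mem_span_singleton.mpr ⟨b, h3.symm⟩)
      · have h5 := aux_sat (E := E) hm0 Λt Zc hZcE hwX.2 hwm
        have hsplit : ι x = b • (1 : E ⊗[O] Λ) + (ι x - b • (1 : E ⊗[O] Λ)) := by abel
        rw [hsplit]
        exact Submodule.add_mem_sup (Submodule.mem_span_singleton.mpr ⟨b, rfl⟩) h5
    obtain ⟨a, ham, ha⟩ := aux_nak2 m (Λt ⊓ Zc)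
      (Submodule.span O {(1 : E ⊗[O] Λ)}) hXfg hXle
    have ha0 : a ≠ 0 := by
      rintro rfl
      apply Ideal.IsMaximal.ne_top ‹m.IsMaximal›
      rw [Ideal.eq_top_iff_one]
      simpa using m.neg_mem ham
    obtain ⟨⟨x, s⟩, hxs⟩ := hsurj z
    have hxX : ι x ∈ Λt ⊓ Zc := by
      refine ⟨⟨x, rfl⟩, ?_⟩
      show ι x ∈ Subalgebra.center E (E ⊗[O] Λ)
      rw [← hxs]
      show (s : O) • z ∈ Subalgebra.center E (E ⊗[O] Λ)
      rw [hOE]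
      exact Subalgebra.smul_mem _ hz _
    obtain ⟨b, hb⟩ := Submodule.mem_span_singleton.mp (ha (ι x) hxX)
    have hc0 : algebraMap O E a * algebraMap O E (s : O) ≠ 0 := by
      apply mul_ne_zero
      · exact fun hcc => ha0 ((map_eq_zero_iff _ (IsFractionRing.injective O E)).mp hcc)
      · exact fun hcc => nonZeroDivisors.coe_ne_zero s
          ((map_eq_zero_iff _ (IsFractionRing.injective O E)).mp hcc)
    have h2 : (algebraMap O E a * algebraMap O E (s : O)) • z
        = algebraMap O E b • (1 : E ⊗[O] Λ) := by
      rw [mul_smul, ← hOE (s : O) z]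
      rw [show ((s : O) • z) = ι x from hxs]
      rw [← hOE a, ← hb, hOE]
    rw [Algebra.mem_bot]
    refine ⟨algebraMap O E b * (algebraMap O E a * algebraMap O E (s : O))⁻¹, ?_⟩
    calc algebraMap E (E ⊗[O] Λ)
          (algebraMap O E b * (algebraMap O E a * algebraMap O E (s : O))⁻¹)
        = (algebraMap O E b * (algebraMap O E a * algebraMap O E (s : O))⁻¹)
            • (1 : E ⊗[O] Λ) := Algebra.algebraMap_eq_smul_one _
      _ = (algebraMap O E a * algebraMap O E (s : O))⁻¹
            • (algebraMap O E b • (1 : E ⊗[O] Λ)) := by rw [mul_comm, mul_smul]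
      _ = (algebraMap O E a * algebraMap O E (s : O))⁻¹
            • ((algebraMap O E a * algebraMap O E (s : O)) • z) := by rw [h2]
      _ = z := inv_smul_smul₀ hc0 z
    -- ====== DIMENSION ======
  have hdim : Module.finrank E (E ⊗[O] Λ) = d ^ 2 := by
    let β : Module.Basis (Fin d × Fin d) (O ⧸ m) ((O ⧸ m) ⊗[O] Λ) :=
      (Matrix.stdBasis (O ⧸ m) (Fin d) (Fin d)).map e.symm.toLinearEquiv
    have hlift : ∀ p : Fin d × Fin d, ∃ x : Λ, ρ x = β p := fun p => hρs (β p)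
    choose lam hlam using hlift
    set v : Fin d × Fin d → E ⊗[O] Λ := fun p => ι (lam p) with hvdef
    -- spanning after Nakayama
    have hspan_aux : (⊤ : Submodule O Λ) ≤
        Submodule.span O (Set.range lam) ⊔ m • (⊤ : Submodule O Λ) := by
      intro x _
      choose b hb using fun p => Ideal.Quotient.mk_surjective (β.repr (ρ x) p)
      have hx2 : ρ (x - ∑ p, b p • lam p) = 0 := by
        rw [map_sub, map_sum, sub_eq_zero]
        conv_lhs => rw [← Module.Basis.sum_repr β (ρ x)]
        refine Finset.sum_congr rfl fun p _ => ?_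
        rw [map_smul, hlam, ← hb p, ← Ideal.Quotient.algebraMap_eq, algebraMap_smul]
      have hx3 := (hker _).mp hx2
      have hxeq : x = (∑ p, b p • lam p) + (x - ∑ p, b p • lam p) := by abel
      rw [hxeq]
      exact Submodule.add_mem_sup (Submodule.sum_mem _ fun p _ =>
        Submodule.smul_mem _ _ (Submodule.subset_span ⟨p, rfl⟩)) hx3
    obtain ⟨a, ham, ha⟩ := aux_nak2 m ⊤ (Submodule.span O (Set.range lam))
      (Module.finite_def.mp ‹Module.Finite O Λ›) hspan_aux
    have ha0 : a ≠ 0 := by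
      rintro rfl
      apply Ideal.IsMaximal.ne_top ‹m.IsMaximal›
      rw [Ideal.eq_top_iff_one]
      simpa using m.neg_mem ham
    have haE : algebraMap O E a ≠ 0 :=
      fun hc => ha0 ((map_eq_zero_iff _ (IsFractionRing.injective O E)).mp hc)
    have hspan : ⊤ ≤ Submodule.span E (Set.range v) := by
      intro z _
      obtain ⟨⟨x, s⟩, hxs⟩ := hsurj z
      have hsE : algebraMap O E (s : O) ≠ 0 := fun hc => nonZeroDivisors.coe_ne_zero s
        ((map_eq_zero_iff _ (IsFractionRing.injective O E)).mp hc)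
      have hmem : ι (a • x) ∈ Submodule.span E (Set.range v) := by
        have h2 : ι (a • x) ∈ Submodule.map ι (Submodule.span O (Set.range lam)) :=
          Submodule.mem_map_of_mem (ha x trivial)
        rw [Submodule.map_span] at h2
        have hsub : ι '' Set.range lam ⊆
            ((Submodule.span E (Set.range v)).restrictScalars O : Set (E ⊗[O] Λ)) := by
          rintro _ ⟨_, ⟨p, rfl⟩, rfl⟩
          exact Submodule.subset_span ⟨p, rfl⟩
        exact Submodule.span_le.mpr hsub h2
      have h3 : ι (a • x) = (algebraMap O E a * algebraMap O E (s : O)) • z := by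
        rw [map_smul, ← hxs, mul_smul]
        show a • ((s : O) • z) = _
        rw [hOE (s : O), hOE a]
      have hc0 : algebraMap O E a * algebraMap O E (s : O) ≠ 0 := mul_ne_zero haE hsE
      have hz2 : z = (algebraMap O E a * algebraMap O E (s : O))⁻¹ • ι (a • x) := by
        rw [h3, inv_smul_smul₀ hc0]
      rw [hz2]
      exact Submodule.smul_mem _ _ hmem
    -- linear independence
    have hind : LinearIndependent E v := by
      rw [Fintype.linearIndependent_iff]
      intro g hg
      by_contra hcon
      push_neg at hcon
      obtain ⟨p0, hp0⟩ := hcon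
      -- the coefficient lattice
      set sing : Fin d × Fin d → ((Fin d × Fin d) → E) := fun p => Pi.single p 1 with hsingdef
      have hsing_apply : ∀ p q, sing p q = if q = p then (1 : E) else 0 := fun p q =>
        Pi.single_apply p 1 q
      set Lc : Submodule O ((Fin d × Fin d) → E) :=
        { carrier := {x | ∀ p, ∃ bp : O, algebraMap O E bp = x p}
          add_mem' := by
            rintro x y hx hy p
            obtain ⟨bx, hbx⟩ := hx p
            obtain ⟨by', hby⟩ := hy p
            exact ⟨bx + by', by rw [map_add, hbx, hby]; rfl⟩
          zero_mem' := fun p => ⟨0, by rw [map_zero]; rfl⟩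
          smul_mem' := by
            rintro a x hx p
            obtain ⟨bx, hbx⟩ := hx p
            refine ⟨a * bx, ?_⟩
            rw [map_mul, hbx]
            show algebraMap O E a * x p = a • x p
            exact (Algebra.smul_def a (x p)).symm } with hLcdef
      have hsingLc : ∀ p, sing p ∈ Lc := by
        intro p q
        refine ⟨if q = p then 1 else 0, ?_⟩
        rw [apply_ite (algebraMap O E), map_one, map_zero, hsing_apply]
      have hsum_eq : ∀ c : (Fin d × Fin d) → O,
          (∑ p, c p • sing p) = fun q => algebraMap O E (c q) := by
        intro c
        funext q
        rw [Finset.sum_apply]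
        have hterm : ∀ p, (c p • sing p) q = if q = p then algebraMap O E (c p) else 0 := by
          intro p
          rw [Pi.smul_apply, hsing_apply]
          split_ifs with hqp
          · rw [Algebra.smul_def, mul_one]
          · exact smul_zero _
        simp_rw [hterm]
        rw [Finset.sum_ite_eq Finset.univ q (fun p => algebraMap O E (c p))]
        simp
      have hLc_le : Lc ≤ Submodule.span O (Set.range sing) := by
        intro x hx
        choose c hc using hx
        have hxe : x = ∑ p, c p • sing p := by
          rw [hsum_eq]
          funext q
          exact (hc q).symm
        rw [hxe]
        exact Submodule.sum_mem _ fun p _ => Submodule.smul_mem _ _ (Submodule.subset_span ⟨p, rfl⟩)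
      have hLcFG : Lc.FG := aux_fg_of_le (Submodule.fg_span (Set.finite_range sing)) hLc_le
      -- the relation space
      set φ : ((Fin d × Fin d) → E) →ₗ[E] E ⊗[O] Λ :=
        { toFun := fun f => ∑ p, f p • v p
          map_add' := fun f g => by
            simp [add_smul, Finset.sum_add_distrib]
          map_smul' := fun c f => by
            simp [Finset.smul_sum, mul_smul] } with hφdef
      set Zk : Submodule O ((Fin d × Fin d) → E) := (LinearMap.ker φ).restrictScalars O with hZkdef
      have hZkE : ∀ (c : E) f, f ∈ Zk → c • f ∈ Zk := by
        intro c f hf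
        show c • f ∈ LinearMap.ker φ
        rw [LinearMap.mem_ker, map_smul]
        rw [show φ f = 0 from hf, smul_zero]
      -- clear denominators on g
      obtain ⟨s, hs⟩ := IsLocalization.exist_integer_multiples_of_finite (nonZeroDivisors O) g
      have hs' : ∀ p, ∃ bp : O, algebraMap O E bp = (s : O) • g p := fun p => hs p
      choose b hb using hs'
      set f : (Fin d × Fin d) → E := fun p => algebraMap O E (b p) with hfdef
      have hfg2 : ∀ p, f p = (s : O) • g p := fun p => hb p
      have hfL : f ∈ Lc := fun p => ⟨b p, rfl⟩
      have hfZ : f ∈ Zk := by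
        show f ∈ LinearMap.ker φ
        rw [LinearMap.mem_ker]
        have hφf : φ f = (s : O) • φ g := by
          show (∑ p, f p • v p) = (s : O) • ∑ p, g p • v p
          rw [Finset.smul_sum]
          refine Finset.sum_congr rfl fun p _ => ?_
          rw [hfg2 p, smul_assoc]
        rw [hφf, show φ g = 0 from hg, smul_zero]
      have hf0 : f ≠ 0 := by
        intro h0
        have h2 : algebraMap O E (b p0) = 0 := congrFun h0 p0
        have h3 : (s : O) • g p0 = 0 := by rw [← hb p0]; exact h2
        rw [Algebra.smul_def] at h3
        rcases mul_eq_zero.mp h3 with h4 | h4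
        · exact nonZeroDivisors.coe_ne_zero s
            ((map_eq_zero_iff _ (IsFractionRing.injective O E)).mp h4)
        · exact hp0 h4
      have hXne : Lc ⊓ Zk ≠ ⊥ := (Submodule.ne_bot_iff _).mpr ⟨f, ⟨hfL, hfZ⟩, hf0⟩
      have hnotle := aux_notin_smul (E := E) (m := m) Lc Zk hZkE hLcFG hXne
      obtain ⟨f', hf'X, hf'm⟩ := SetLike.not_le_iff_exists.mp hnotle
      choose b' hb' using hf'X.1
      have hb'm : ∃ p, b' p ∉ m := by
        by_contra hall
        push_neg at hall
        apply hf'm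
        have hfeq : f' = ∑ p, b' p • sing p := by
          rw [hsum_eq]
          funext q
          exact (hb' q).symm
        rw [hfeq]
        exact Submodule.sum_mem _ fun p _ => Submodule.smul_mem_smul (hall p) (hsingLc p)
      obtain ⟨p1, hp1⟩ := hb'm
      have hrel : ∑ p, b' p • lam p = 0 := by
        apply hιinj
        rw [map_sum, map_zero]
        have hφf' : φ f' = 0 := hf'X.2
        calc (∑ p, ι (b' p • lam p)) = ∑ p, f' p • v p := by
              refine Finset.sum_congr rfl fun p _ => ?_
              rw [map_smul, ← hb' p]
              exact hOE (b' p) (v p)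
          _ = 0 := hφf'
      have hred : (∑ p, (Ideal.Quotient.mk m (b' p)) • β p) = 0 := by
        have h4 := congrArg ρ hrel
        rw [map_sum, map_zero] at h4
        rw [← h4]
        refine Finset.sum_congr rfl fun p _ => ?_
        rw [map_smul, hlam, ← Ideal.Quotient.algebraMap_eq, algebraMap_smul]
      have h5 := Fintype.linearIndependent_iff.mp β.linearIndependent _ hred p1
      exact hp1 (by rwa [Ideal.Quotient.eq_zero_iff_mem] at h5)
    let B : Module.Basis (Fin d × Fin d) E (E ⊗[O] Λ) := Module.Basis.mk hind hspan
    rw [Module.finrank_eq_card_basis B, Fintype.card_prod, Fintype.card_fin, sq]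
  exact ⟨hsimple, hcentral, hdim⟩
end

section
/- Let F be a field, G a group, V a finite-dimensional F-vector space with an irreducible linear representation ρ: G → Aut_F(V), and let R ⊆ End_F(V) be an F-subalgebra containing the identity such that ρ(σ)Rρ(σ)^{-1} ⊆ R for all σ ∈ G. Then V, viewed as a faithful R-module, is semisimple. -/
set_option synthInstance.maxHeartbeats 400000

/-- Let `ρ : G → Aut_F(V)` be an irreducible representation on a finite-dimensional
`F`-vector space `V`, and let `R ⊆ End_F(V)` be a `G`-normal `F`-subalgebra (containing the
identity, and stable under conjugation by every `ρ(σ)`). Then `V`, viewed as a (faithful)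
`R`-module, is semisimple. -/
theorem stmt_4 (F : Type) [Field F] (V : Type) [AddCommGroup V] [Module F V]
    [FiniteDimensional F V] [Nontrivial V]
    (G : Type) [Group G] (ρ : G →* (V ≃ₗ[F] V))
    (hirr : ∀ W : Submodule F V, (∀ g : G, W.map (ρ g).toLinearMap ≤ W) → W = ⊥ ∨ W = ⊤)
    (R : Subalgebra F (Module.End F V))
    (hR : ∀ g : G, ∀ x ∈ R, (ρ g).conj x ∈ R) :
    letI : Module R V := Module.compHom V R.val.toRingHom
    IsSemisimpleModule R V := by
  letI : Module R V := Module.compHom V R.val.toRingHom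
  have hsmul : ∀ (r : R) (v : V), r • v = (r : Module.End F V) v := fun r v => rfl
  haveI tower : IsScalarTower F R V := by
    constructor
    intro f r v
    rw [hsmul, hsmul]
    simp
  haveI : IsArtinian R V := by
    refine @isArtinian_of_tower F R V _ _ _ _ _ _ ?_ ?_
    · exact tower
    · infer_instance
  haveI : IsAtomic (Submodule R V) :=
    isAtomic_of_orderBot_wellFounded_lt (wellFounded_lt (α := Submodule R V))
  -- the conjugated submodule
  have hbij : ∀ (g : G) (v : V), ρ g⁻¹ (ρ g v) = v := by
    intro g v
    rw [map_inv]
    exact (ρ g).symm_apply_apply v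
  let Φ : G → Submodule R V → Submodule R V := fun g p =>
    { carrier := (ρ g) '' p
      add_mem' := by
        rintro _ _ ⟨x, hx, rfl⟩ ⟨y, hy, rfl⟩
        exact ⟨x + y, p.add_mem hx hy, map_add _ _ _⟩
      zero_mem' := ⟨0, p.zero_mem, map_zero _⟩
      smul_mem' := by
        rintro r _ ⟨w, hw, rfl⟩
        refine ⟨(⟨(ρ g⁻¹).conj r, hR g⁻¹ r r.2⟩ : R) • w, p.smul_mem _ hw, ?_⟩
        rw [hsmul]
        show ρ g ((ρ g⁻¹).conj (r : Module.End F V) w) = (r : Module.End F V) (ρ g w)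
        rw [LinearEquiv.conj_apply_apply, map_inv]
        show ρ g ((ρ g).symm ((r : Module.End F V) (ρ g w))) = (r : Module.End F V) (ρ g w)
        exact (ρ g).apply_symm_apply _ }
  have Φmem : ∀ (g : G) (p : Submodule R V) (v : V), v ∈ Φ g p ↔ ∃ w ∈ p, ρ g w = v :=
    fun g p v => Iff.rfl
  have Φinv : ∀ (g : G) (p : Submodule R V), Φ g⁻¹ (Φ g p) = p := by
    intro g p
    ext v
    rw [Φmem]
    constructor
    · rintro ⟨w, hw, rfl⟩
      rw [Φmem] at hw
      obtain ⟨u, hu, rfl⟩ := hw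
      rwa [hbij]
    · intro hv
      exact ⟨ρ g v, (Φmem g p _).2 ⟨v, hv, rfl⟩, hbij g v⟩
  have Φmono : ∀ g, Monotone (Φ g) := by
    intro g p q h v hv
    obtain ⟨w, hw, rfl⟩ := (Φmem g p v).1 hv
    exact (Φmem g q _).2 ⟨w, h hw, rfl⟩
  let E : G → Submodule R V ≃o Submodule R V := fun g =>
    { toFun := Φ g
      invFun := Φ g⁻¹
      left_inv := Φinv g
      right_inv := fun p => by simpa using Φinv g⁻¹ p
      map_rel_iff' := @fun p q => by
        constructor
        · intro h
          have h' : Φ g p ≤ Φ g q := h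
          have := Φmono g⁻¹ h'
          rwa [Φinv, Φinv] at this
        · exact fun h => Φmono g h }
  set S := sSup {m : Submodule R V | IsAtom m} with hSdef
  have hinv : ∀ g : G, E g S = S := by
    intro g
    have himg : (E g) '' {m : Submodule R V | IsAtom m} = {m : Submodule R V | IsAtom m} := by
      ext m
      constructor
      · rintro ⟨a, ha, rfl⟩
        exact ((E g).isAtom_iff a).2 ha
      · intro hm
        exact ⟨(E g).symm m, ((E g).symm.isAtom_iff m).2 hm, (E g).apply_symm_apply m⟩
    rw [hSdef, OrderIso.map_sSup, ← sSup_image, himg]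
  have hbot : S ≠ ⊥ := by
    rcases IsAtomic.eq_bot_or_exists_atom_le (⊤ : Submodule R V) with h | ⟨a, ha, -⟩
    · obtain ⟨v, hv⟩ := exists_ne (0 : V)
      exact absurd ((Submodule.mem_bot R).1 (h ▸ Submodule.mem_top (x := v))) hv
    · intro h0
      exact ha.1 (le_bot_iff.1 (h0 ▸ le_sSup ha))
  have htop : S = ⊤ := by
    have hmap : ∀ g : G,
        (@Submodule.restrictScalars F R V _ _ _ _ _ _ tower S).map (ρ g).toLinearMap ≤ @Submodule.restrictScalars F R V _ _ _ _ _ _ tower S := by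
      intro g x hx
      obtain ⟨v, hv, rfl⟩ := hx
      have hv' : v ∈ S := hv
      have : ρ g v ∈ E g S := (Φmem g S _).2 ⟨v, hv', rfl⟩
      rw [hinv g] at this
      exact this
    rcases hirr _ hmap with h | h
    · exact absurd ((@Submodule.restrictScalars_eq_bot_iff F (↥R) V _ _ _ _ _ _ tower _).1 h) hbot
    · exact (@Submodule.restrictScalars_eq_top_iff F (↥R) V _ _ _ _ _ _ tower _).1 h
  refine IsSemisimpleModule.of_sSup_simples_eq_top ?_
  have hset : {m : Submodule R V | IsSimpleModule R m} = {m | IsAtom m} := by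
    ext m
    exact isSimpleModule_iff_isAtom
  rw [hset]
  exact htop
end

section
/- Let F be a field, G a group, V a finite-dimensional F-vector space with an irreducible representation of G, and suppose every G-normal subalgebra of End_F(V) is a central simple F-algebra. Then the centralizer End_G(V) is a central division algebra over F. In particular, if the G-module V is very simple (every G-normal subalgebra equals F·Id or End_F(V)), then End_G(V) = F·Id. -/
/-- Let `ρ : G → Aut_F(V)` be irreducible, and suppose every `G`-normal subalgebra of
`End_F(V)` is central simple over `F`. Then the centralizer `End_G(V)` (the commutant of the
image of `G`) is a central division algebra over `F`. In particular, if `V` is very simple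
(every `G`-normal subalgebra equals `F·Id` or `End_F(V)`), then `End_G(V) = F·Id`. -/
theorem stmt_10 (F : Type) [Field F] (V : Type) [AddCommGroup V] [Module F V]
    [FiniteDimensional F V] [Nontrivial V]
    (G : Type) [Group G] (ρ : G →* (V ≃ₗ[F] V))
    (hirr : ∀ W : Submodule F V, (∀ g : G, W.map (ρ g).toLinearMap ≤ W) → W = ⊥ ∨ W = ⊤)
    (hcs : ∀ R : Subalgebra F (Module.End F V),
      (∀ g : G, ∀ x ∈ R, (ρ g).conj x ∈ R) →
        IsSimpleRing R ∧ Algebra.IsCentral F R) :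
    (∀ x : (Subalgebra.centralizer F
        (Set.range fun g : G => (ρ g).toLinearMap) : Subalgebra F (Module.End F V)),
        x ≠ 0 → IsUnit x) ∧
    Algebra.IsCentral F
      (Subalgebra.centralizer F (Set.range fun g : G => (ρ g).toLinearMap)) ∧
    ((∀ R : Subalgebra F (Module.End F V),
        (∀ g : G, ∀ x ∈ R, (ρ g).conj x ∈ R) → R = ⊥ ∨ R = ⊤) →
      Subalgebra.centralizer F (Set.range fun g : G => (ρ g).toLinearMap) = ⊥) := by
  set S : Set (Module.End F V) := Set.range fun g : G => (ρ g).toLinearMap with hS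
  have hmem : ∀ x : Module.End F V, x ∈ Subalgebra.centralizer F S ↔
      ∀ g : G, (ρ g).toLinearMap * x = x * (ρ g).toLinearMap := by
    intro x
    rw [Subalgebra.mem_centralizer_iff]
    constructor
    · intro h g; exact h _ ⟨g, rfl⟩
    · rintro h y ⟨g, rfl⟩; exact h g
  -- conjugation acts trivially on the centralizer
  have hconj : ∀ g : G, ∀ x ∈ Subalgebra.centralizer F S, (ρ g).conj x = x := by
    intro g x hx
    have h := (hmem x).mp hx g
    ext v
    have h2 := LinearMap.congr_fun h ((ρ g).symm v)
    simp only [Module.End.mul_apply] at h2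
    simp only [LinearEquiv.conj_apply, LinearMap.comp_apply,
      LinearEquiv.coe_toLinearMap] at *
    rw [h2]
    simp
  have hGnorm : ∀ g : G, ∀ x ∈ Subalgebra.centralizer F S,
      (ρ g).conj x ∈ Subalgebra.centralizer F S := by
    intro g x hx; rw [hconj g x hx]; exact hx
  obtain ⟨hsimple, hcentral⟩ := hcs (Subalgebra.centralizer F S) hGnorm
  refine ⟨?_, hcentral, ?_⟩
  · -- Schur: every nonzero element of the centralizer is a unit
    rintro ⟨x, hx⟩ hne
    have hxne : x ≠ 0 := fun h => hne (Subtype.ext h)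
    have hcomm := (hmem x).mp hx
    have hker : LinearMap.ker x = ⊥ := by
      have hkinv : ∀ g : G, (LinearMap.ker x).map (ρ g).toLinearMap ≤ LinearMap.ker x := by
        intro g
        rintro v ⟨w, hw, rfl⟩
        have h2 := LinearMap.congr_fun (hcomm g) w
        simp only [Module.End.mul_apply] at h2
        rw [SetLike.mem_coe, LinearMap.mem_ker] at hw
        rw [LinearMap.mem_ker, ← h2, hw, map_zero]
      rcases hirr _ hkinv with h | h
      · exact h
      · exact absurd (LinearMap.ker_eq_top.mp h) hxne
    have hrange : LinearMap.range x = ⊤ := by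
      have hrinv : ∀ g : G, (LinearMap.range x).map (ρ g).toLinearMap ≤ LinearMap.range x := by
        intro g
        rintro v ⟨w, ⟨u, rfl⟩, rfl⟩
        have h2 := LinearMap.congr_fun (hcomm g) u
        simp only [Module.End.mul_apply] at h2
        exact ⟨(ρ g).toLinearMap u, h2.symm⟩
      rcases hirr _ hrinv with h | h
      · exact absurd (LinearMap.range_eq_bot.mp h) hxne
      · exact h
    have hbij : Function.Bijective x :=
      ⟨LinearMap.ker_eq_bot.mp hker, LinearMap.range_eq_top.mp hrange⟩
    have hux : IsUnit x := (Module.End.isUnit_iff x).mpr hbij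
    obtain ⟨u, hu⟩ := hux
    have hinvmem : (↑u⁻¹ : Module.End F V) ∈ Subalgebra.centralizer F S := by
      rw [hmem]
      intro g
      have : Commute (ρ g).toLinearMap (↑u : Module.End F V) := by
        rw [hu]; exact hcomm g
      exact this.units_inv_right
    exact ⟨⟨⟨x, hx⟩, ⟨↑u⁻¹, hinvmem⟩,
      Subtype.ext (by simpa [← hu] using u.mul_inv),
      Subtype.ext (by simpa [← hu] using u.inv_mul)⟩, rfl⟩
  · -- very simple case
    intro hother
    rcases hother _ hGnorm with h | h
    · exact h
    · -- centralizer = ⊤: then each ρ g is central, so every submodule is invariant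
      have hinv : ∀ (W : Submodule F V) (g : G), W.map (ρ g).toLinearMap ≤ W := by
        intro W g
        obtain ⟨W', hW'⟩ := Submodule.exists_isCompl W
        set p : Module.End F V := W.subtype ∘ₗ W.linearProjOfIsCompl W' hW' with hp
        have hpmem : p ∈ Subalgebra.centralizer F S := h ▸ Algebra.mem_top
        have hcomm := (hmem p).mp hpmem g
        rintro v ⟨w, hw, rfl⟩
        have h2 := LinearMap.congr_fun hcomm w
        simp only [Module.End.mul_apply] at h2
        have hpw : p w = w := by
          simp [hp, Submodule.linearProjOfIsCompl_apply_left hW' ⟨w, hw⟩]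
          exact congrArg Subtype.val (Submodule.linearProjOfIsCompl_apply_left hW' ⟨w, hw⟩)
        rw [hpw] at h2
        rw [h2]
        simp only [hp, LinearMap.comp_apply, Submodule.subtype_apply]
        exact Submodule.coe_mem _
      have hsm : IsSimpleModule F V := by
        have : IsSimpleOrder (Submodule F V) := ⟨fun W => hirr W (hinv W)⟩; exact ⟨⟩
      have hfr : Module.finrank F V = 1 := isSimpleModule_iff_finrank_eq_one.mp hsm
      have hfrEnd : Module.finrank F (Module.End F V) = 1 := by
        show Module.finrank F (V →ₗ[F] V) = 1
        rw [Module.finrank_linearMap, hfr]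
      rw [h, ← Subalgebra.bot_eq_top_iff_finrank_eq_one.mpr hfrEnd]
end

section
/- Let p be a prime with p ≡ ±1 (mod 5). Then the group PSL(2, 𝔽_p) contains a subgroup isomorphic to the alternating group A_5; equivalently, 5 divides the order p(p²-1)/2 of PSL(2, 𝔽_p). -/
set_option linter.unusedTactic false


section KeyLemma

variable {G : Type*} [Group G]

/-- The twelve coset-representative words. -/
def wrd (a b : G) : Fin 12 → G := fun i =>
  match i with
  | ⟨0, _⟩ => 1
  | ⟨1, _⟩ => a
  | ⟨2, _⟩ => b * a
  | ⟨3, _⟩ => a * b * a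
  | ⟨4, _⟩ => b * a * b * a
  | ⟨5, _⟩ => a * b * a * b * a
  | ⟨6, _⟩ => b * b * a * b * a
  | ⟨7, _⟩ => b * a * b * a * b * a
  | ⟨8, _⟩ => b * b * a * b * a * b * a
  | ⟨9, _⟩ => a * b * b * a * b * a * b * a
  | ⟨10, _⟩ => b * a * b * b * a * b * a * b * a
  | ⟨11, _⟩ => a * b * a * b * b * a * b * a * b * a

variable {a b : G} (ha : a * a = 1) (hb : b * b * b = 1) (hab : (a * b) ^ 5 = 1)

include ha hb hab in
set_option maxHeartbeats 3200000 in
theorem stepA : ∀ i : Fin 12, ∃ (j : Fin 12) (l : ℕ), a * wrd a b i = wrd a b j * (a * b) ^ l := by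
  have hab' : a * b * (a * b) * (a * b) * (a * b) * (a * b) = (1 : G) := by rw [← hab]; simp [pow_succ, mul_assoc]
  clear hab
  intro i
  fin_cases i
  · refine ⟨1, 0, ?_⟩
    show a * (1) = (a) * ((a*b):G) ^ 0
    rw [pow_zero]
  · refine ⟨0, 0, ?_⟩
    show a * (a) = (1) * ((a*b):G) ^ 0
    rw [pow_zero]
    have h : a * (a) * ((1) * 1)⁻¹ = (a * a) := by group
    have h2 : ((a * a) : G) = 1 := by rw [ha]
    exact mul_inv_eq_one.mp (h.trans h2)
  · refine ⟨3, 0, ?_⟩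
    show a * (b * a) = (a * b * a) * ((a*b):G) ^ 0
    rw [pow_zero]
    group
  · refine ⟨2, 0, ?_⟩
    show a * (a * b * a) = (b * a) * ((a*b):G) ^ 0
    rw [pow_zero]
    have h : a * (a * b * a) * ((b * a) * 1)⁻¹ = (a * a) := by group
    have h2 : ((a * a) : G) = 1 := by rw [ha]
    exact mul_inv_eq_one.mp (h.trans h2)
  · refine ⟨5, 0, ?_⟩
    show a * (b * a * b * a) = (a * b * a * b * a) * ((a*b):G) ^ 0
    rw [pow_zero]
    group
  · refine ⟨4, 0, ?_⟩
    show a * (a * b * a * b * a) = (b * a * b * a) * ((a*b):G) ^ 0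
    rw [pow_zero]
    have h : a * (a * b * a * b * a) * ((b * a * b * a) * 1)⁻¹ = (a * a) := by group
    have h2 : ((a * a) : G) = 1 := by rw [ha]
    exact mul_inv_eq_one.mp (h.trans h2)
  · refine ⟨7, 4, ?_⟩
    show a * (b * b * a * b * a) = (b * a * b * a * b * a) * ((a*b):G) ^ 4
    rw [show ((a*b):G)^4 = (a * b * (a * b) * (a * b) * (a * b)) by simp [pow_succ, mul_assoc]]
    have h : a * (b * b * a * b * a) * ((b * a * b * a * b * a) * (a * b * (a * b) * (a * b) * (a * b)))⁻¹ = (a * b * b * a * b * a) * (a * b * (a * b) * (a * b) * (a * b) * (a * b))⁻¹ * (a * b * b * a * b * a)⁻¹ * (a * b * b * a * b * a * a * b * a⁻¹) * (a * b * (a * b) * (a * b) * (a * b) * (a * b))⁻¹ * (a * b * b * a * b * a * a * b * a⁻¹)⁻¹ * (a * b * b * a * b) * (a * a) * (a * b * b * a * b)⁻¹ * (a * b * b * a) * (b * b * b) * (a * b * b * a)⁻¹ * (a * b * b) * (a * a) * (a * b * b)⁻¹ * (a) * (b * b * b) * (a)⁻¹ * (a * a) := by group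
    have h2 : ((a * b * b * a * b * a) * (a * b * (a * b) * (a * b) * (a * b) * (a * b))⁻¹ * (a * b * b * a * b * a)⁻¹ * (a * b * b * a * b * a * a * b * a⁻¹) * (a * b * (a * b) * (a * b) * (a * b) * (a * b))⁻¹ * (a * b * b * a * b * a * a * b * a⁻¹)⁻¹ * (a * b * b * a * b) * (a * a) * (a * b * b * a * b)⁻¹ * (a * b * b * a) * (b * b * b) * (a * b * b * a)⁻¹ * (a * b * b) * (a * a) * (a * b * b)⁻¹ * (a) * (b * b * b) * (a)⁻¹ * (a * a) : G) = 1 := by rw [ha, hab', hb]; group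
    exact mul_inv_eq_one.mp (h.trans h2)
  · refine ⟨6, 1, ?_⟩
    show a * (b * a * b * a * b * a) = (b * b * a * b * a) * ((a*b):G) ^ 1
    rw [pow_one]
    have h : a * (b * a * b * a * b * a) * ((b * b * a * b * a) * (a * b))⁻¹ = (a * b * (a * b) * (a * b) * (a * b) * (a * b)) * (b⁻¹ * a⁻¹ * b⁻¹ * b⁻¹) * (a * a)⁻¹ * (b⁻¹ * a⁻¹ * b⁻¹ * b⁻¹)⁻¹ * (b⁻¹ * a⁻¹) * (b * b * b)⁻¹ * (b⁻¹ * a⁻¹)⁻¹ * (b⁻¹) * (a * a)⁻¹ * (b⁻¹)⁻¹ * (b * b * b)⁻¹ := by group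
    have h2 : ((a * b * (a * b) * (a * b) * (a * b) * (a * b)) * (b⁻¹ * a⁻¹ * b⁻¹ * b⁻¹) * (a * a)⁻¹ * (b⁻¹ * a⁻¹ * b⁻¹ * b⁻¹)⁻¹ * (b⁻¹ * a⁻¹) * (b * b * b)⁻¹ * (b⁻¹ * a⁻¹)⁻¹ * (b⁻¹) * (a * a)⁻¹ * (b⁻¹)⁻¹ * (b * b * b)⁻¹ : G) = 1 := by rw [ha, hab', hb]; group
    exact mul_inv_eq_one.mp (h.trans h2)
  · refine ⟨9, 0, ?_⟩
    show a * (b * b * a * b * a * b * a) = (a * b * b * a * b * a * b * a) * ((a*b):G) ^ 0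
    rw [pow_zero]
    group
  · refine ⟨8, 0, ?_⟩
    show a * (a * b * b * a * b * a * b * a) = (b * b * a * b * a * b * a) * ((a*b):G) ^ 0
    rw [pow_zero]
    have h : a * (a * b * b * a * b * a * b * a) * ((b * b * a * b * a * b * a) * 1)⁻¹ = (a * a) := by group
    have h2 : ((a * a) : G) = 1 := by rw [ha]
    exact mul_inv_eq_one.mp (h.trans h2)
  · refine ⟨11, 0, ?_⟩
    show a * (b * a * b * b * a * b * a * b * a) = (a * b * a * b * b * a * b * a * b * a) * ((a*b):G) ^ 0
    rw [pow_zero]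
    group
  · refine ⟨10, 0, ?_⟩
    show a * (a * b * a * b * b * a * b * a * b * a) = (b * a * b * b * a * b * a * b * a) * ((a*b):G) ^ 0
    rw [pow_zero]
    have h : a * (a * b * a * b * b * a * b * a * b * a) * ((b * a * b * b * a * b * a * b * a) * 1)⁻¹ = (a * a) := by group
    have h2 : ((a * a) : G) = 1 := by rw [ha]
    exact mul_inv_eq_one.mp (h.trans h2)

include ha hb hab in
set_option maxHeartbeats 3200000 in
theorem stepB : ∀ i : Fin 12, ∃ (j : Fin 12) (l : ℕ), b * wrd a b i = wrd a b j * (a * b) ^ l := by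
  have hab' : a * b * (a * b) * (a * b) * (a * b) * (a * b) = (1 : G) := by rw [← hab]; simp [pow_succ, mul_assoc]
  clear hab
  intro i
  fin_cases i
  · refine ⟨1, 1, ?_⟩
    show b * (1) = (a) * ((a*b):G) ^ 1
    rw [pow_one]
    have h : b * (1) * ((a) * (a * b))⁻¹ = (a * a)⁻¹ := by group
    have h2 : ((a * a)⁻¹ : G) = 1 := by rw [ha]; group
    exact mul_inv_eq_one.mp (h.trans h2)
  · refine ⟨2, 0, ?_⟩
    show b * (a) = (b * a) * ((a*b):G) ^ 0
    rw [pow_zero]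
    group
  · refine ⟨0, 4, ?_⟩
    show b * (b * a) = (1) * ((a*b):G) ^ 4
    rw [show ((a*b):G)^4 = (a * b * (a * b) * (a * b) * (a * b)) by simp [pow_succ, mul_assoc]]
    have h : b * (b * a) * ((1) * (a * b * (a * b) * (a * b) * (a * b)))⁻¹ = (b * b * a) * (a * b * (a * b) * (a * b) * (a * b) * (a * b))⁻¹ * (b * b * a)⁻¹ * (b * b) * (a * a) * (b * b)⁻¹ * (b * b * b) := by group
    have h2 : ((b * b * a) * (a * b * (a * b) * (a * b) * (a * b) * (a * b))⁻¹ * (b * b * a)⁻¹ * (b * b) * (a * a) * (b * b)⁻¹ * (b * b * b) : G) = 1 := by rw [ha, hab', hb]; group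
    exact mul_inv_eq_one.mp (h.trans h2)
  · refine ⟨4, 0, ?_⟩
    show b * (a * b * a) = (b * a * b * a) * ((a*b):G) ^ 0
    rw [pow_zero]
    group
  · refine ⟨6, 0, ?_⟩
    show b * (b * a * b * a) = (b * b * a * b * a) * ((a*b):G) ^ 0
    rw [pow_zero]
    group
  · refine ⟨7, 0, ?_⟩
    show b * (a * b * a * b * a) = (b * a * b * a * b * a) * ((a*b):G) ^ 0
    rw [pow_zero]
    group
  · refine ⟨3, 0, ?_⟩
    show b * (b * b * a * b * a) = (a * b * a) * ((a*b):G) ^ 0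
    rw [pow_zero]
    have h : b * (b * b * a * b * a) * ((a * b * a) * 1)⁻¹ = (b * b * b) := by group
    have h2 : ((b * b * b) : G) = 1 := by rw [hb]
    exact mul_inv_eq_one.mp (h.trans h2)
  · refine ⟨8, 0, ?_⟩
    show b * (b * a * b * a * b * a) = (b * b * a * b * a * b * a) * ((a*b):G) ^ 0
    rw [pow_zero]
    group
  · refine ⟨5, 0, ?_⟩
    show b * (b * b * a * b * a * b * a) = (a * b * a * b * a) * ((a*b):G) ^ 0
    rw [pow_zero]
    have h : b * (b * b * a * b * a * b * a) * ((a * b * a * b * a) * 1)⁻¹ = (b * b * b) := by group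
    have h2 : ((b * b * b) : G) = 1 := by rw [hb]
    exact mul_inv_eq_one.mp (h.trans h2)
  · refine ⟨10, 0, ?_⟩
    show b * (a * b * b * a * b * a * b * a) = (b * a * b * b * a * b * a * b * a) * ((a*b):G) ^ 0
    rw [pow_zero]
    group
  · refine ⟨11, 4, ?_⟩
    show b * (b * a * b * b * a * b * a * b * a) = (a * b * a * b * b * a * b * a * b * a) * ((a*b):G) ^ 4
    rw [show ((a*b):G)^4 = (a * b * (a * b) * (a * b) * (a * b)) by simp [pow_succ, mul_assoc]]
    have h : b * (b * a * b * b * a * b * a * b * a) * ((a * b * a * b * b * a * b * a * b * a) * (a * b * (a * b) * (a * b) * (a * b)))⁻¹ = (b * b * a * b * b * a * b * a * b * a) * (a * b * (a * b) * (a * b) * (a * b) * (a * b))⁻¹ * (b * b * a * b * b * a * b * a * b * a)⁻¹ * (b * b * a * b * b * a * b * a * b * a * a * b * a⁻¹) * (a * b * (a * b) * (a * b) * (a * b) * (a * b))⁻¹ * (b * b * a * b * b * a * b * a * b * a * a * b * a⁻¹)⁻¹ * (b * b * a * b * b * a * b * a * b) * (a * a) * (b * b * a * b * b * a * b * a * b)⁻¹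 * (b * b * a * b * b * a * b * a) * (b * b * b) * (b * b * a * b * b * a * b * a)⁻¹ * (b * b * a * b * b * a * b) * (a * a) * (b * b * a * b * b * a * b)⁻¹ * (b * b * a * b * b * a) * (b * b * b) * (b * b * a * b * b * a)⁻¹ * (b * b * a * b * b * a * b⁻¹) * (a * a) * (b * b * a * b * b * a * b⁻¹)⁻¹ * (b * b * a * b * b * a) * (a * b * (a * b) * (a * b) * (a * b) * (a * b))⁻¹ * (b * b * a * b * b * a)⁻¹ * (b * b * a * b * b) * (a * a) * (b * b * a * b * b)⁻¹ * (b * b * a) * (b * b * b) * (b * b * a)⁻¹ * (b * b) * (a * a) * (b * b)⁻¹ * (b * b * b) := by group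
    have h2 : ((b * b * a * b * b * a * b * a * b * a) * (a * b * (a * b) * (a * b) * (a * b) * (a * b))⁻¹ * (b * b * a * b * b * a * b * a * b * a)⁻¹ * (b * b * a * b * b * a * b * a * b * a * a * b * a⁻¹) * (a * b * (a * b) * (a * b) * (a * b) * (a * b))⁻¹ * (b * b * a * b * b * a * b * a * b * a * a * b * a⁻¹)⁻¹ * (b * b * a * b * b * a * b * a * b) * (a * a) * (b * b * a * b * b * a * b * a * b)⁻¹ * (b * b * a * b * b * a * b * a) * (b * b * b) * (b * b * a * b * b * a * b * a)⁻¹ * (b * b * a * b * b * a * b) * (a * a) * (b * b * a * b * b * a * b)⁻¹ * (b * b * a * b * b * a) * (b * b * b) * (b * b * a * b * b * a)⁻¹ * (b * b * a * b * b * a * b⁻¹) * (a * a) * (b * b * a * b * b * a * b⁻¹)⁻¹ * (b * b * a * b * b * a) * (a * b * (a * b) * (a * b) * (a * b) * (a * b))⁻¹ * (b * b * a * b * b * a)⁻¹ * (b * b * a * b * b) * (a * a) * (b * b * a * b * b)⁻¹ * (b * b * a) * (b * b * b) * (b * b * a)⁻¹ * (b * b) * (a * a) * (b * b)⁻¹ *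 (b * b * b) : G) = 1 := by rw [ha, hab', hb]; group
    exact mul_inv_eq_one.mp (h.trans h2)
  · refine ⟨9, 1, ?_⟩
    show b * (a * b * a * b * b * a * b * a * b * a) = (a * b * b * a * b * a * b * a) * ((a*b):G) ^ 1
    rw [pow_one]
    have h : b * (a * b * a * b * b * a * b * a * b * a) * ((a * b * b * a * b * a * b * a) * (a * b))⁻¹ = (b * a * b * a * b * b) * (a * b * (a * b) * (a * b) * (a * b) * (a * b)) * (b * a * b * a * b * b)⁻¹ * (b * a * b * a * b * a⁻¹ * b⁻¹ * a⁻¹ * b⁻¹ * b⁻¹) * (a * a)⁻¹ * (b * a * b * a * b * a⁻¹ * b⁻¹ * a⁻¹ * b⁻¹ * b⁻¹)⁻¹ * (b * a * b * a * b * a⁻¹ * b⁻¹ * a⁻¹) * (b * b * b)⁻¹ * (b * a * b * a * b * a⁻¹ * b⁻¹ * a⁻¹)⁻¹ * (b * a * b * a * b * a⁻¹ * b⁻¹) * (a * a)⁻¹ * (b * a * b * a * b * a⁻¹ * b⁻¹)⁻¹ * (b) * (a * b * (a * b) * (a * b) * (a * b) * (a * b)) * (b)⁻¹ * (a⁻¹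 * b⁻¹ * a⁻¹ * b⁻¹) * (a * a)⁻¹ * (a⁻¹ * b⁻¹ * a⁻¹ * b⁻¹)⁻¹ * (a⁻¹ * b⁻¹ * a⁻¹) * (b * b * b)⁻¹ * (a⁻¹ * b⁻¹ * a⁻¹)⁻¹ * (a⁻¹ * b⁻¹) * (a * a)⁻¹ * (a⁻¹ * b⁻¹)⁻¹ * (a⁻¹) * (b * b * b)⁻¹ * (a⁻¹)⁻¹ * (a * a)⁻¹ := by group
    have h2 : ((b * a * b * a * b * b) * (a * b * (a * b) * (a * b) * (a * b) * (a * b)) * (b * a * b * a * b * b)⁻¹ * (b * a * b * a * b * a⁻¹ * b⁻¹ * a⁻¹ * b⁻¹ * b⁻¹) * (a * a)⁻¹ * (b * a * b * a * b * a⁻¹ * b⁻¹ * a⁻¹ * b⁻¹ * b⁻¹)⁻¹ * (b * a * b * a * b * a⁻¹ * b⁻¹ * a⁻¹) * (b * b * b)⁻¹ * (b * a * b * a * b * a⁻¹ * b⁻¹ * a⁻¹)⁻¹ * (b * a * b * a * b * a⁻¹ * b⁻¹) * (a * a)⁻¹ * (b * a * b * a * b * a⁻¹ * b⁻¹)⁻¹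 * (b) * (a * b * (a * b) * (a * b) * (a * b) * (a * b)) * (b)⁻¹ * (a⁻¹ * b⁻¹ * a⁻¹ * b⁻¹) * (a * a)⁻¹ * (a⁻¹ * b⁻¹ * a⁻¹ * b⁻¹)⁻¹ * (a⁻¹ * b⁻¹ * a⁻¹) * (b * b * b)⁻¹ * (a⁻¹ * b⁻¹ * a⁻¹)⁻¹ * (a⁻¹ * b⁻¹) * (a * a)⁻¹ * (a⁻¹ * b⁻¹)⁻¹ * (a⁻¹) * (b * b * b)⁻¹ * (a⁻¹)⁻¹ * (a * a)⁻¹ : G) = 1 := by rw [ha, hab', hb]; group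
    exact mul_inv_eq_one.mp (h.trans h2)

include ha hb hab in
theorem key_words : ∀ z : FreeGroup (Fin 2), ∃ (i : Fin 12) (k : ℕ),
    FreeGroup.lift ![a, b] z = wrd a b i * (a * b) ^ k := by
  have hmulA : ∀ g : G, (∃ i k, g = wrd a b i * (a * b) ^ k) →
      ∃ i k, a * g = wrd a b i * (a * b) ^ k := by
    rintro g ⟨i, k, rfl⟩
    obtain ⟨j, l, hs⟩ := stepA ha hb hab i
    exact ⟨j, l + k, by rw [← mul_assoc, hs, mul_assoc, ← pow_add]⟩
  have hmulB : ∀ g : G, (∃ i k, g = wrd a b i * (a * b) ^ k) →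
      ∃ i k, b * g = wrd a b i * (a * b) ^ k := by
    rintro g ⟨i, k, rfl⟩
    obtain ⟨j, l, hs⟩ := stepB ha hb hab i
    exact ⟨j, l + k, by rw [← mul_assoc, hs, mul_assoc, ← pow_add]⟩
  have hainv : (a : G)⁻¹ = a := by
    rw [inv_eq_iff_mul_eq_one, ha]
  have hbinv : (b : G)⁻¹ = b * b := by
    rw [inv_eq_iff_mul_eq_one, ← mul_assoc, hb]
  have hof : ∀ y : Fin 2, FreeGroup.lift ![a, b] (FreeGroup.mk [(y, true)]) = ![a, b] y := by
    intro y; exact FreeGroup.lift_apply_of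
  have hof' : ∀ y : Fin 2, FreeGroup.lift ![a, b] (FreeGroup.mk [(y, false)]) = (![a, b] y)⁻¹ := by
    intro y
    have h1 : (FreeGroup.of y)⁻¹ = FreeGroup.mk [(y, false)] := by
      show (FreeGroup.mk [(y, true)])⁻¹ = _
      rw [FreeGroup.inv_mk]; rfl
    rw [← h1, map_inv, FreeGroup.lift_apply_of]
  have hletter : ∀ (y : Fin 2) (s : Bool) (g : G), (∃ i k, g = wrd a b i * (a * b) ^ k) →
      ∃ i k, FreeGroup.lift ![a, b] (FreeGroup.mk [(y, s)]) * g = wrd a b i * (a * b) ^ k := by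
    intro y s g hg
    cases s
    · rw [hof' y]
      fin_cases y
      · show ∃ i k, a⁻¹ * g = wrd a b i * (a * b) ^ k
        rw [hainv]; exact hmulA g hg
      · show ∃ i k, b⁻¹ * g = wrd a b i * (a * b) ^ k
        rw [hbinv, mul_assoc]; exact hmulB _ (hmulB g hg)
    · rw [hof y]
      fin_cases y
      · exact hmulA g hg
      · exact hmulB g hg
  intro z
  rw [← FreeGroup.mk_toWord (x := z)]
  generalize z.toWord = L
  induction L with
  | nil =>
    refine ⟨0, 0, ?_⟩
    rw [← FreeGroup.one_eq_mk, map_one]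
    show (1 : G) = 1 * (a * b) ^ 0
    rw [pow_zero, mul_one]
  | cons p L ih =>
    obtain ⟨x, s⟩ := p
    have hsplit : FreeGroup.mk ((x, s) :: L) = FreeGroup.mk [(x, s)] * FreeGroup.mk L := by
      rw [FreeGroup.mul_mk]; rfl
    rw [hsplit, map_mul]
    exact hletter x s _ ih

end KeyLemma

section A5Part

open Equiv

/-- The relations of the (2,3,5) triangle presentation. -/
abbrev A5rels : Set (FreeGroup (Fin 2)) :=
  {FreeGroup.of 0 * FreeGroup.of 0, FreeGroup.of 1 * FreeGroup.of 1 * FreeGroup.of 1,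
    (FreeGroup.of 0 * FreeGroup.of 1) ^ 5}

/-- The presented group `⟨a, b ∣ a² = b³ = (ab)⁵ = 1⟩`. -/
abbrev KG := PresentedGroup A5rels

def KA : KG := PresentedGroup.of 0
def KB : KG := PresentedGroup.of 1

theorem Krel (r : FreeGroup (Fin 2)) (hr : r ∈ A5rels) : PresentedGroup.mk A5rels r = 1 :=
  (QuotientGroup.eq_one_iff r).mpr (Subgroup.subset_normalClosure hr)

theorem hKA : KA * KA = 1 := by
  have h := Krel _ (Set.mem_insert _ _)
  rw [map_mul] at h; exact h

theorem hKB : KB * KB * KB = 1 := by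
  have h := Krel _ (Set.mem_insert_of_mem _ (Set.mem_insert _ _))
  rw [map_mul, map_mul] at h; exact h

theorem hKAB : (KA * KB) ^ 5 = 1 := by
  have h := Krel _ (Set.mem_insert_of_mem _ (Set.mem_insert_of_mem _ rfl))
  rw [map_pow, map_mul] at h; exact h

def Xp : Equiv.Perm (Fin 5) := Equiv.swap 0 1 * Equiv.swap 2 3
def Yp : Equiv.Perm (Fin 5) := Equiv.swap 0 2 * Equiv.swap 2 4

def X : alternatingGroup (Fin 5) := ⟨Xp, by
  show _ ∈ alternatingGroup (Fin 5)
  rw [Equiv.Perm.mem_alternatingGroup]; decide⟩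
def Y : alternatingGroup (Fin 5) := ⟨Yp, by
  show _ ∈ alternatingGroup (Fin 5)
  rw [Equiv.Perm.mem_alternatingGroup]; decide⟩

theorem XYrel : ∀ r ∈ A5rels, FreeGroup.lift ![X, Y] r = 1 := by
  intro r hr
  simp only [Set.mem_insert_iff, Set.mem_singleton_iff] at hr
  rcases hr with rfl | rfl | rfl
  · simp only [map_mul, FreeGroup.lift_apply_of]
    show X * X = 1
    rw [Subtype.ext_iff]; decide
  · simp only [map_mul, FreeGroup.lift_apply_of]
    show Y * Y * Y = 1
    rw [Subtype.ext_iff]; decide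
  · simp only [map_pow, map_mul, FreeGroup.lift_apply_of]
    show (X * Y) ^ 5 = 1
    rw [Subtype.ext_iff]; decide

/-- The canonical map `K → A₅`. -/
def KtoA5 : KG →* alternatingGroup (Fin 5) := PresentedGroup.toGroup XYrel

theorem wrd_map {G H : Type*} [Group G] [Group H] (f : G →* H) (a b : G) (i : Fin 12) :
    f (wrd a b i) = wrd (f a) (f b) i := by
  fin_cases i <;>
    simp [wrd, map_mul, map_one, Matrix.cons_val_zero, Matrix.cons_val_one, Matrix.head_cons]

set_option maxHeartbeats 4000000 in
set_option maxRecDepth 100000 in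
theorem cover : ∀ σ : Equiv.Perm (Fin 5), Equiv.Perm.sign σ = 1 →
    ∃ (i : Fin 12) (k : Fin 5), σ = wrd Xp Yp i * (Xp * Yp) ^ (k : ℕ) := by decide

theorem KtoA5_A : KtoA5 KA = X := by
  show PresentedGroup.toGroup XYrel (PresentedGroup.of 0) = X
  rw [PresentedGroup.toGroup.of]
  rfl

theorem KtoA5_B : KtoA5 KB = Y := by
  show PresentedGroup.toGroup XYrel (PresentedGroup.of 1) = Y
  rw [PresentedGroup.toGroup.of]
  rfl

theorem KtoA5_surj : Function.Surjective KtoA5 := by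
  intro σ
  obtain ⟨i, k, hik⟩ := cover σ.val (Equiv.Perm.mem_alternatingGroup.mp σ.prop)
  refine ⟨wrd KA KB i * (KA * KB) ^ (k : ℕ), ?_⟩
  rw [map_mul, map_pow, map_mul, wrd_map, KtoA5_A, KtoA5_B]
  refine Subtype.ext ?_
  rw [hik]
  have hX : (X : Equiv.Perm (Fin 5)) = Xp := rfl
  have hY : (Y : Equiv.Perm (Fin 5)) = Yp := rfl
  have hw := wrd_map ((alternatingGroup (Fin 5)).subtype) X Y i
  simp only [Subgroup.coe_subtype] at hw
  push_cast [hw, hX, hY]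
  rfl

theorem lift_eq_mk : FreeGroup.lift ![KA, KB] = PresentedGroup.mk A5rels := by
  apply FreeGroup.ext_hom
  intro x
  rw [FreeGroup.lift_apply_of]
  fin_cases x
  · rfl
  · rfl

theorem pow_mod_five {G : Type*} [Group G] {x : G} (h : x ^ 5 = 1) (k : ℕ) :
    x ^ k = x ^ (k % 5) := by
  conv_lhs => rw [← Nat.div_add_mod k 5, pow_add, pow_mul, h, one_pow, one_mul]

theorem K_surj60 : Function.Surjective
    (fun ik : Fin 12 × Fin 5 => wrd KA KB ik.1 * (KA * KB) ^ ((ik.2 : ℕ))) := by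
  intro g
  obtain ⟨z, rfl⟩ := PresentedGroup.mk_surjective A5rels g
  obtain ⟨i, k, hik⟩ := key_words hKA hKB hKAB z
  rw [lift_eq_mk] at hik
  refine ⟨(i, ⟨k % 5, Nat.mod_lt _ (by norm_num)⟩), ?_⟩
  simp only
  rw [hik, pow_mod_five hKAB k]

instance : Finite KG := Finite.of_surjective _ K_surj60

theorem A5card : Nat.card (alternatingGroup (Fin 5)) = 60 := by
  rw [Nat.card_eq_fintype_card]
  have h := @two_mul_card_alternatingGroup (Fin 5) _ _ _
  rw [Fintype.card_perm] at h
  simp only [Fintype.card_fin] at h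
  have h120 : Nat.factorial 5 = 120 := by decide
  rw [h120] at h
  omega

theorem KtoA5_bij : Function.Bijective KtoA5 := by
  refine (Nat.bijective_iff_surjective_and_card KtoA5).mpr ⟨KtoA5_surj, ?_⟩
  have h1 : Nat.card KG ≤ 60 := by
    have := Nat.card_le_card_of_surjective _ K_surj60
    simpa using this
  have h2 : 60 ≤ Nat.card KG := by
    have := Nat.card_le_card_of_surjective _ KtoA5_surj
    rw [A5card] at this; exact this
  rw [A5card]; omega

/-- The isomorphism between the (2,3,5)-presented group and A₅. -/
noncomputable def KequivA5 : KG ≃* alternatingGroup (Fin 5) := MulEquiv.ofBijective _ KtoA5_bij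

end A5Part


section PSLPart

theorem exists_A5_subgroup (p : ℕ) [Fact p.Prime] (hp2 : p ≠ 2) (hsq : IsSquare (5 : ZMod p)) :
    ∃ H : Subgroup (Matrix.ProjectiveSpecialLinearGroup (Fin 2) (ZMod p)),
      Nonempty (H ≃* alternatingGroup (Fin 5)) := by
  have h2ne : (2 : ZMod p) ≠ 0 := by
    have h' : ((2 : ℕ) : ZMod p) ≠ 0 := by
      rw [Ne, ZMod.natCast_eq_zero_iff]
      intro hdvd
      exact hp2 ((Nat.prime_dvd_prime_iff_eq (Fact.out) (by norm_num)).mp hdvd)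
    simpa using h'
  have h2 : (2 : ZMod p) * (2 : ZMod p)⁻¹ = 1 := mul_inv_cancel₀ h2ne
  -- a root of the golden-ratio polynomial
  obtain ⟨t, ht⟩ : ∃ t : ZMod p, t * t = t + 1 := by
    obtain ⟨s, hs⟩ := hsq
    refine ⟨(1 + s) * (2 : ZMod p)⁻¹, ?_⟩
    linear_combination (1 + (3 + s) * (2 : ZMod p)⁻¹) * h2 + ((2 : ZMod p)⁻¹ * (2 : ZMod p)⁻¹) * hs.symm
  -- entries of the order-3 matrix
  obtain ⟨xx, yy, zz, ww, htr, hyz, hdet⟩ :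
      ∃ xx yy zz ww : ZMod p, xx + ww = 1 ∧ yy - zz = t ∧ xx * ww - yy * zz = 1 := by
    obtain ⟨u, v, huv⟩ := ZMod.sq_add_sq p ((t - 2) * ((2 : ZMod p)⁻¹ * (2 : ZMod p)⁻¹))
    refine ⟨u + (2 : ZMod p)⁻¹, v + t * (2 : ZMod p)⁻¹, v - t * (2 : ZMod p)⁻¹,
      (2 : ZMod p)⁻¹ - u, ?_, ?_, ?_⟩
    · linear_combination h2
    · linear_combination t * h2
    · linear_combination (2 * (2 : ZMod p)⁻¹ + 1) * h2 + ((2 : ZMod p)⁻¹ * (2 : ZMod p)⁻¹) * ht - huv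
  clear h2 h2ne
  -- matrices
  have hdetA : (!![0, -1; 1, 0] : Matrix (Fin 2) (Fin 2) (ZMod p)).det = 1 := by
    rw [Matrix.det_fin_two_of]; ring
  have hdetB : (!![xx, yy; zz, ww] : Matrix (Fin 2) (Fin 2) (ZMod p)).det = 1 := by
    rw [Matrix.det_fin_two_of]; linear_combination hdet
  have hdetm1 : (-1 : Matrix (Fin 2) (Fin 2) (ZMod p)).det = 1 := by
    simp [Matrix.det_fin_two, Matrix.one_apply]
  have hMa2 : (!![0, -1; 1, 0] : Matrix (Fin 2) (Fin 2) (ZMod p)) * !![0, -1; 1, 0] = -1 := by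
    ext i j
    fin_cases i <;> fin_cases j <;>
      simp [Matrix.mul_apply, Fin.sum_univ_succ, Matrix.one_apply]
  have hMb2 : (!![xx, yy; zz, ww] : Matrix (Fin 2) (Fin 2) (ZMod p)) * !![xx, yy; zz, ww] =
      !![xx, yy; zz, ww] - 1 := by
    ext i j
    fin_cases i <;> fin_cases j <;>
        simp [Matrix.mul_apply, Fin.sum_univ_succ, Matrix.one_apply, Matrix.sub_apply]
    all_goals first
      | ring1
      | linear_combination xx * htr - hdet
      | linear_combination -(xx * htr - hdet)
      | linear_combination yy * htr
      | linear_combination -(yy * htr)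
      | linear_combination zz * htr
      | linear_combination -(zz * htr)
      | linear_combination ww * htr - hdet
      | linear_combination -(ww * htr - hdet)
  have hMb3 : (!![xx, yy; zz, ww] : Matrix (Fin 2) (Fin 2) (ZMod p)) * !![xx, yy; zz, ww] *
      !![xx, yy; zz, ww] = -1 := by
    rw [hMb2, sub_mul, one_mul, hMb2]
    abel
  have hmc : (!![0, -1; 1, 0] : Matrix (Fin 2) (Fin 2) (ZMod p)) * !![xx, yy; zz, ww] =
      !![-zz, -ww; xx, yy] := by
    ext i j
    fin_cases i <;> fin_cases j <;>
      simp [Matrix.mul_apply, Fin.sum_univ_succ]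
  have hc2 : (!![-zz, -ww; xx, yy] : Matrix (Fin 2) (Fin 2) (ZMod p)) * !![-zz, -ww; xx, yy] =
      !![-t * zz - 1, -t * ww; t * xx, t * yy - 1] := by
    ext i j
    fin_cases i <;> fin_cases j <;> simp [Matrix.mul_apply, Fin.sum_univ_succ]
    all_goals first
      | ring1
      | linear_combination -hdet - zz * hyz
      | linear_combination hdet + zz * hyz
      | linear_combination -ww * hyz
      | linear_combination ww * hyz
      | linear_combination xx * hyz
      | linear_combination -(xx * hyz)
      | linear_combination -hdet + yy * hyz
      | linear_combination hdet - yy * hyz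
  have hc4 : (!![-t * zz - 1, -t * ww; t * xx, t * yy - 1] : Matrix (Fin 2) (Fin 2) (ZMod p)) *
      !![-t * zz - 1, -t * ww; t * xx, t * yy - 1] = !![-yy, -ww; xx, zz] := by
    ext i j
    fin_cases i <;> fin_cases j <;> simp [Matrix.mul_apply, Fin.sum_univ_succ]
    all_goals first
      | ring1
      | linear_combination (1 - t * t * zz) * hyz - (zz + t * zz + 1) * ht - (t * t) * hdet
      | linear_combination -((1 - t * t * zz) * hyz - (zz + t * zz + 1) * ht - (t * t) * hdet)
      | linear_combination -(t * t * ww) * hyz - (ww * (1 + t)) * ht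
      | linear_combination -(-(t * t * ww) * hyz - (ww * (1 + t)) * ht)
      | linear_combination (t * t * xx) * hyz + (xx * (1 + t)) * ht
      | linear_combination -((t * t * xx) * hyz + (xx * (1 + t)) * ht)
      | linear_combination (1 + t * t * yy) * hyz + (yy * (1 + t) - 1) * ht - (t * t) * hdet
      | linear_combination -((1 + t * t * yy) * hyz + (yy * (1 + t) - 1) * ht - (t * t) * hdet)
  have hc5 : (!![-yy, -ww; xx, zz] : Matrix (Fin 2) (Fin 2) (ZMod p)) * !![-zz, -ww; xx, yy] =
      -1 := by
    ext i j
    fin_cases i <;> fin_cases j <;>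
      simp [Matrix.mul_apply, Fin.sum_univ_succ, Matrix.one_apply]
    all_goals first
      | ring1
      | linear_combination hdet
      | linear_combination -hdet
  have hMc5 : ((!![0, -1; 1, 0] : Matrix (Fin 2) (Fin 2) (ZMod p)) * !![xx, yy; zz, ww]) ^ 5 =
      -1 := by
    rw [hmc, show (5 : ℕ) = 2 + 2 + 1 from rfl, pow_add, pow_add, pow_one, pow_two, hc2, hc4, hc5]
  -- SL(2, p) elements (introduced as opaque variables to avoid type unfolding)
  obtain ⟨aS, haS⟩ : ∃ x : Matrix.SpecialLinearGroup (Fin 2) (ZMod p), x = ⟨_, hdetA⟩ := ⟨_, rfl⟩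
  obtain ⟨bS, hbS⟩ : ∃ x : Matrix.SpecialLinearGroup (Fin 2) (ZMod p), x = ⟨_, hdetB⟩ := ⟨_, rfl⟩
  obtain ⟨mS, hmS⟩ : ∃ x : Matrix.SpecialLinearGroup (Fin 2) (ZMod p), x = ⟨-1, hdetm1⟩ :=
    ⟨_, rfl⟩
  have hA2 : aS * aS = mS := by
    rw [haS, hmS]; exact Subtype.ext hMa2
  have hB3 : bS * bS * bS = mS := by
    rw [hbS, hmS]; exact Subtype.ext hMb3
  have hC5 : (aS * bS) ^ 5 = mS := by
    rw [haS, hbS, hmS]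
    refine Subtype.ext ?_
    rw [Matrix.SpecialLinearGroup.coe_pow]
    exact hMc5
  -- the quotient map to PSL(2, p)
  have hm1c : mS ∈ Subgroup.center (Matrix.SpecialLinearGroup (Fin 2) (ZMod p)) := by
    rw [Subgroup.mem_center_iff]
    intro g
    refine Subtype.ext ?_
    rw [hmS]
    show (g : Matrix (Fin 2) (Fin 2) (ZMod p)) * (-1) = (-1) * (g : Matrix (Fin 2) (Fin 2) (ZMod p))
    simp
  set π : Matrix.SpecialLinearGroup (Fin 2) (ZMod p) →*
      Matrix.ProjectiveSpecialLinearGroup (Fin 2) (ZMod p) :=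
    QuotientGroup.mk' (Subgroup.center (Matrix.SpecialLinearGroup (Fin 2) (ZMod p))) with hπ
  have hπm1 : π mS = 1 := by
    rw [hπ]
    exact (QuotientGroup.eq_one_iff _).mpr hm1c
  obtain ⟨α, hαdef⟩ : ∃ x, x = π aS := ⟨_, rfl⟩
  obtain ⟨β, hβdef⟩ : ∃ x, x = π bS := ⟨_, rfl⟩
  have hα : α * α = 1 := by
    rw [hαdef, ← map_mul, hA2]
    exact hπm1
  have hβ : β * β * β = 1 := by
    rw [hβdef, ← map_mul, ← map_mul, hB3]
    exact hπm1
  have hαβ : (α * β) ^ 5 = 1 := by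
    rw [hαdef, hβdef, ← map_mul, ← map_pow, hC5]
    exact hπm1
  have hαne : α ≠ 1 := by
    intro hone
    rw [hαdef, hπ] at hone
    have hone' : aS ∈ Subgroup.center (Matrix.SpecialLinearGroup (Fin 2) (ZMod p)) :=
      (QuotientGroup.eq_one_iff _).mp hone
    have hdetg : (!![1, 1; 0, 1] : Matrix (Fin 2) (Fin 2) (ZMod p)).det = 1 := by
      rw [Matrix.det_fin_two_of]; ring
    obtain ⟨gS, hgS⟩ : ∃ x : Matrix.SpecialLinearGroup (Fin 2) (ZMod p), x = ⟨_, hdetg⟩ :=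
      ⟨_, rfl⟩
    have hcomm := Subgroup.mem_center_iff.mp hone' gS
    rw [haS, hgS] at hcomm
    have hval : (!![1, 1; 0, 1] : Matrix (Fin 2) (Fin 2) (ZMod p)) * !![0, -1; 1, 0] =
        !![0, -1; 1, 0] * !![1, 1; 0, 1] := congrArg Subtype.val hcomm
    have hprod1 : (!![1, 1; 0, 1] : Matrix (Fin 2) (Fin 2) (ZMod p)) * !![0, -1; 1, 0] =
        !![1, -1; 1, 0] := by
      ext i j
      fin_cases i <;> fin_cases j <;> simp [Matrix.mul_apply, Fin.sum_univ_succ]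
    have hprod2 : (!![0, -1; 1, 0] : Matrix (Fin 2) (Fin 2) (ZMod p)) * !![1, 1; 0, 1] =
        !![0, -1; 1, 1] := by
      ext i j
      fin_cases i <;> fin_cases j <;> simp [Matrix.mul_apply, Fin.sum_univ_succ]
    rw [hprod1, hprod2] at hval
    have h00 := congrArg (fun M : Matrix (Fin 2) (Fin 2) (ZMod p) => M 0 0) hval
    simp only [Matrix.of_apply, Matrix.cons_val_zero, Matrix.cons_val'] at h00
    exact one_ne_zero h00
  -- homomorphism from the presented group
  have hrelψ : ∀ r ∈ A5rels, FreeGroup.lift ![α, β] r = 1 := by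
    intro r hr
    simp only [Set.mem_insert_iff, Set.mem_singleton_iff] at hr
    rcases hr with rfl | rfl | rfl
    · simp only [map_mul, FreeGroup.lift_apply_of]
      show α * α = 1
      exact hα
    · simp only [map_mul, FreeGroup.lift_apply_of]
      show β * β * β = 1
      exact hβ
    · simp only [map_pow, map_mul, FreeGroup.lift_apply_of]
      show (α * β) ^ 5 = 1
      exact hαβ
  have hψKA : PresentedGroup.toGroup hrelψ KA = α := by
    show PresentedGroup.toGroup hrelψ (PresentedGroup.of 0) = α
    rw [PresentedGroup.toGroup.of]
    rfl
  set Φ : alternatingGroup (Fin 5) →*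
      Matrix.ProjectiveSpecialLinearGroup (Fin 2) (ZMod p) :=
    (PresentedGroup.toGroup hrelψ).comp KequivA5.symm.toMonoidHom with hΦdef
  have hΦval : Φ (KequivA5 KA) = α := by
    rw [hΦdef]
    simp only [MonoidHom.comp_apply, MulEquiv.coe_toMonoidHom, MulEquiv.symm_apply_apply]
    exact hψKA
  have hker : Φ.ker = ⊥ := by
    rcases Subgroup.Normal.eq_bot_or_eq_top (MonoidHom.normal_ker Φ) with h | h
    · exact h
    · exfalso
      apply hαne
      rw [← hΦval]
      have hmem : KequivA5 KA ∈ Φ.ker := by rw [h]; trivial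
      exact hmem
  have hinj : Function.Injective Φ := (MonoidHom.ker_eq_bot_iff Φ).mp hker
  exact ⟨Φ.range, ⟨(MonoidHom.ofInjective hinj).symm⟩⟩

end PSLPart


open Matrix

/-- If `p` is a prime with `p ≡ ±1 (mod 5)`, then `PSL(2, 𝔽_p)` contains a subgroup
isomorphic to the alternating group `A_5`; equivalently, `5` divides the order
`p(p²-1)/2` of `PSL(2, 𝔽_p)`. -/
theorem stmt_13 (p : ℕ) [Fact p.Prime] (h5 : p % 5 = 1 ∨ p % 5 = 4) :
    (∃ H : Subgroup (Matrix.ProjectiveSpecialLinearGroup (Fin 2) (ZMod p)),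
        Nonempty (H ≃* alternatingGroup (Fin 5))) ∧
      5 ∣ p * (p ^ 2 - 1) / 2 := by
  have hp2 : p ≠ 2 := by rintro rfl; omega
  constructor
  · -- the A₅ subgroup
    have hL : IsSquare ((p : ℕ) : ZMod 5) := by
      have hcast : ((p : ℕ) : ZMod 5) = ((p % 5 : ℕ) : ZMod 5) := (ZMod.natCast_mod p 5).symm
      rcases h5 with h | h
      · rw [hcast, h]; decide
      · rw [hcast, h]; decide
    haveI : Fact (Nat.Prime 5) := ⟨by norm_num⟩
    have hiff := ZMod.exists_sq_eq_prime_iff_of_mod_four_eq_one (p := 5) (q := p) (by norm_num) hp2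
    have hsq : IsSquare (5 : ZMod p) := by
      have h' := hiff.mp hL
      have : (((5 : ℕ) : ZMod p)) = (5 : ZMod p) := by push_cast; ring
      rwa [this] at h'
    exact exists_A5_subgroup p hp2 hsq
  · -- the divisibility
    have hp2' : p % 2 = 1 := (Nat.Prime.mod_two_eq_one_iff_ne_two Fact.out).mpr hp2
    have h10 : p % 10 = 1 ∨ p % 10 = 9 := by omega
    have hsqmod : p ^ 2 % 10 = 1 := by
      rw [Nat.pow_mod]
      rcases h10 with h | h <;> rw [h] <;> norm_num
    have hple : 1 ≤ p ^ 2 := Nat.one_le_pow _ _ (Nat.Prime.pos Fact.out)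
    obtain ⟨c, hc⟩ : ∃ c, p ^ 2 - 1 = 10 * c := ⟨(p ^ 2 - 1) / 10, by omega⟩
    rw [hc]
    have hmul : p * (10 * c) = 2 * (5 * (p * c)) := by ring
    rw [hmul, Nat.mul_div_cancel_left _ (by norm_num : 0 < 2)]
    exact Dvd.intro (p * c) rfl
end
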